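/- arXiv:1010.4750 — 7 statements merged into one kernel-verified Lean document; each statement's English description precedes it below -/
import Mathlib

section
/- Let a₂ ∈ ℤ and Q₀(n) := a₂n². For every nonnegative integer l and every f ∈ ℤ[z^{±1},q^{±1}], the element Λ_{Q₀}((q^{-l}z;q)_{2l+1}·f) is divisible by (q^{l+1};q)_{l+1} in ℤ[q^{±1}]. -/
open LaurentPolynomial

noncomputable section

/-- `ℤ[q^{±1}]`, the ring of Laurent polynomials in `q` over `ℤ`. -/
abbrev Rq := LaurentPolynomial ℤ

/-- `ℤ[z^{±1}, q^{±1}]`, with `z = T` (the outer variable) and `q = C (T 1)`. -/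
abbrev Rzq := LaurentPolynomial Rq

/-- `(q^a z; q)_k = ∏_{i=0}^{k-1} (1 - q^{a+i} z)` as an element of `ℤ[z^{±1}, q^{±1}]`. -/
def pochZ (a : ℤ) (k : ℕ) : Rzq :=
  ∏ i ∈ Finset.range k, (1 - C (T (a + (i : ℤ))) * T 1)

/-- `Λ_Q`, the `ℤ[q^{±1}]`-linear map `ℤ[z^{±1},q^{±1}] → ℤ[q^{±1}]` with `Λ_Q(z^j) = q^{Q(j)}`. -/
def Lam (Q : ℤ → ℤ) (f : Rzq) : Rq := Finsupp.sum f.coeff fun j c => c * T (Q j)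

/-!
Write `V(c, k, j) = Λ_{Q₀}((q^c z; q)_k z^j)`. Since `Q₀(n + j) = Q₀(n) + 2a₂jn + Q₀(j)`, the factor
`z^j` only moves `c`, so it suffices to treat `j = 0`. Expanding the first and the last factor
of the Pochhammer symbol gives `V(c+1, k+1, 0) - V(c, k+1, 0) = q^c (1 - q^{k+1}) V(c+1, k, 1)`, so
inductively all `V(c, k+1, 0)` agree modulo `(q^{⌊(k+1)/2⌋+1}; q)_{⌈(k+1)/2⌉}`. Because `Q₀` is
even, `Λ_{Q₀}` is invariant under `z ↦ z⁻¹`, which relates `V(c, k, 0)` to `±q^e V(c', k, 0)` for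
an explicit involution `c ↦ c'`. For odd `k` it has a fixed point where the sign is `-1` and
`e = 0`, so that common value is `0`. For even `k = 2m + 2` a pair `c' = c - 1` with `e = m + 1`
shows that `(1 - q^{m+1}) V` is divisible; the missing factor `1 + q^{m+1}` is then recovered since
it is monic and `2` is the only common factor of `1 ± q^{m+1}`.
-/

def lamLinear (Q : ℤ → ℤ) : Rzq →ₗ[Rq] Rq :=
  Finsupp.linearCombination Rq (fun j => T (Q j)) ∘ₗ
    (AddMonoidAlgebra.coeffLinearEquiv Rq).toLinearMap

lemma lamLinear_apply (Q : ℤ → ℤ) (f : Rzq) : lamLinear Q f = Lam Q f := rfl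

section Lam

variable (Q : ℤ → ℤ)

lemma Lam_add (f g : Rzq) : Lam Q (f + g) = Lam Q f + Lam Q g :=
  map_add (lamLinear Q) f g

lemma Lam_sub (f g : Rzq) : Lam Q (f - g) = Lam Q f - Lam Q g :=
  map_sub (lamLinear Q) f g

lemma Lam_C_mul (r : Rq) (f : Rzq) : Lam Q (C r * f) = r * Lam Q f := by
  rw [← smul_eq_C_mul, ← lamLinear_apply, map_smul, smul_eq_mul, lamLinear_apply]

lemma Lam_T (j : ℤ) : Lam Q (T j) = T (Q j) := by
  rw [Lam, T, AddMonoidAlgebra.coeff_single, Finsupp.sum_single_index (zero_mul _), one_mul]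

lemma Lam_invert (hQ : ∀ j, Q (-j) = Q j) (f : Rzq) : Lam Q (invert f) = Lam Q f := by
  induction f using AddMonoidAlgebra.induction_linear with
  | zero => rw [map_zero]
  | add f g hf hg => rw [map_add, Lam_add, Lam_add, hf, hg]
  | single j r =>
    rw [single_eq_C_mul_T, map_mul, invert_C, invert_T, Lam_C_mul, Lam_C_mul, Lam_T, Lam_T, hQ]

lemma dvd_Lam_mul_of_forall_dvd_Lam_mul_T {D : Rq} {g : Rzq} (h : ∀ j, D ∣ Lam Q (g * T j))
    (f : Rzq) : D ∣ Lam Q (g * f) := by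
  induction f using AddMonoidAlgebra.induction_linear with
  | zero => rw [mul_zero, ← lamLinear_apply, map_zero]; exact dvd_zero D
  | add f f' hf hf' => rw [mul_add, Lam_add]; exact dvd_add hf hf'
  | single j r =>
    rw [single_eq_C_mul_T, mul_left_comm, Lam_C_mul]
    exact (h j).mul_left r

end Lam

section Poch

open Finset

lemma pochZ_succ (c : ℤ) (k : ℕ) : pochZ c (k + 1) = pochZ c k * (1 - C (T (c + k)) * T 1) :=
  prod_range_succ _ _

lemma pochZ_succ' (c : ℤ) (k : ℕ) :
    pochZ c (k + 1) = (1 - C (T c) * T 1) * pochZ (c + 1) k := by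
  simp only [pochZ, prod_range_succ', Nat.cast_zero, add_zero, Nat.cast_succ, add_assoc,
    add_comm (1 : ℤ), mul_comm]

lemma invert_pochZ (c : ℤ) (k : ℕ) :
    invert (pochZ c k) =
      (-1 : Rzq) ^ k * C (T (∑ i ∈ range k, (c + i))) * T (-k) * pochZ (-c - k + 1) k := by
  induction k with
  | zero => simp [pochZ]
  | succ k ih =>
    have hXY : C (T (c + k)) * C (T (-c - k)) * T (-1) * T 1 = (1 : Rzq) := by
      rw [← map_mul, ← T_add, mul_assoc, ← T_add]; simp
    rw [pochZ_succ, map_mul, ih, sum_range_succ, show -c - ↑(k + 1) + 1 = -c - k by push_cast; ring,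
      pochZ_succ', T_add _ (c + k), map_mul,
      show -((k + 1 : ℕ) : ℤ) = -k + -1 by push_cast; ring, T_add (-k : ℤ)]
    simp only [map_sub, map_one, map_mul, invert_C, invert_T]
    linear_combination -(-1 : Rzq) ^ k * C (T (∑ i ∈ range k, (c + i))) * T (-k) *
      pochZ (-c - k + 1) k * hXY

end Poch

def lamPoch (a c : ℤ) (k : ℕ) (j : ℤ) : Rq := Lam (fun n => a * n ^ 2) (pochZ c k * T j)

section LamPoch

variable (a : ℤ)

lemma lamPoch_zero (c j : ℤ) : lamPoch a c 0 j = T (a * j ^ 2) := by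
  rw [lamPoch, pochZ, Finset.prod_range_zero, one_mul, Lam_T]

lemma lamPoch_succ (c : ℤ) (k : ℕ) (j : ℤ) :
    lamPoch a c (k + 1) j = lamPoch a c k j - T (c + k) * lamPoch a c k (j + 1) := by
  rw [lamPoch, lamPoch, lamPoch, ← Lam_C_mul, ← Lam_sub, pochZ_succ, T_add j 1]
  ring_nf

lemma lamPoch_succ' (c : ℤ) (k : ℕ) (j : ℤ) :
    lamPoch a c (k + 1) j = lamPoch a (c + 1) k j - T c * lamPoch a (c + 1) k (j + 1) := by
  rw [lamPoch, lamPoch, lamPoch, ← Lam_C_mul, ← Lam_sub, pochZ_succ', T_add j 1]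
  ring_nf

lemma lamPoch_eq_T_mul_lamPoch (k : ℕ) :
    ∀ c j, lamPoch a c k j = T (a * j ^ 2) * lamPoch a (c + 2 * a * j) k 0 := by
  induction k with
  | zero => intro c j; simp [lamPoch_zero]
  | succ k ih =>
    intro c j
    rw [lamPoch_succ, lamPoch_succ, ih c j, ih c (j + 1), zero_add, ih _ 1, mul_sub, ← mul_assoc,
      ← mul_assoc, ← mul_assoc, ← T_add, ← T_add, ← T_add]
    ring_nf

lemma lamPoch_symm (c : ℤ) (k : ℕ) :
    lamPoch a c k 0 = (-1) ^ k * T (∑ i ∈ Finset.range k, (c + i) + a * k ^ 2) *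
      lamPoch a (-c - k + 1 - 2 * a * k) k 0 := by
  have hQ : ∀ j : ℤ, a * (-j) ^ 2 = a * j ^ 2 := fun j => by ring
  have h := lamPoch_eq_T_mul_lamPoch a k (-c - k + 1) (-k)
  have hC : (-1 : Rzq) ^ k * C (T (∑ i ∈ Finset.range k, (c + i))) * T (-k) *
      pochZ (-c - k + 1) k = C ((-1) ^ k * T (∑ i ∈ Finset.range k, (c + i))) *
      (pochZ (-c - k + 1) k * T (-k)) := by
    simp only [map_mul, map_pow, map_neg, map_one]; ring
  rw [lamPoch, T_zero, mul_one, ← Lam_invert _ hQ, invert_pochZ, hC, Lam_C_mul, ← lamPoch, h,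
    T_add, neg_sq]
  ring_nf

end LamPoch

def qPoch (a : ℤ) (n : ℕ) : Rq := ∏ i ∈ Finset.range n, (1 - T (a + i))

lemma qPoch_succ (a : ℤ) (n : ℕ) : qPoch a (n + 1) = qPoch a n * (1 - T (a + n)) :=
  Finset.prod_range_succ _ _

lemma qPoch_succ' (a : ℤ) (n : ℕ) : qPoch a (n + 1) = (1 - T a) * qPoch (a + 1) n := by
  simp only [qPoch, Finset.prod_range_succ', Nat.cast_zero, add_zero, Nat.cast_succ, add_assoc,
    add_comm (1 : ℤ), mul_comm]

lemma one_sub_T_ne_zero {n : ℤ} (hn : n ≠ 0) : (1 - T n : Rq) ≠ 0 := by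
  rw [sub_ne_zero, ← T_zero, Ne, T, T, AddMonoidAlgebra.single_left_inj one_ne_zero]
  exact hn.symm

lemma qPoch_ne_zero {a : ℤ} (ha : 0 < a) (n : ℕ) : qPoch a n ≠ 0 :=
  Finset.prod_ne_zero_iff.mpr fun i _ => one_sub_T_ne_zero (by omega)

lemma one_sub_T_add_self (n : ℤ) : (1 - T (n + n) : Rq) = (1 - T n) * (1 + T n) := by
  rw [T_add]; ring

lemma qPoch_add_two_eq_one_add_T_mul (m : ℕ) :
    qPoch (m + 2) (m + 1) = (1 + T (m + 1)) * qPoch (m + 1) (m + 1) := by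
  refine mul_left_cancel₀ (one_sub_T_ne_zero (n := m + 1) (by omega)) ?_
  have h := qPoch_succ' (m + 1) (m + 1)
  rw [qPoch_succ, show ((m : ℤ) + 1 + ((m + 1 : ℕ) : ℤ)) = (m + 1) + (m + 1) by push_cast; ring,
    one_sub_T_add_self, show (m : ℤ) + 1 + 1 = m + 2 by ring] at h
  linear_combination -h

lemma Polynomial.dvd_of_toLaurent_dvd_toLaurent {R : Type*} [CommRing R] {p q : Polynomial R}
    (hp : IsCoprime p Polynomial.X) (h : toLaurent p ∣ toLaurent q) : p ∣ q := by
  obtain ⟨u, hu⟩ := h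
  obtain ⟨n, u', hu'⟩ := exists_T_pow u
  have hpq : p * u' = q * Polynomial.X ^ n := by
    apply Polynomial.toLaurent_injective
    rw [map_mul, map_mul, hu', hu, Polynomial.toLaurent_X_pow, mul_assoc]
  exact (hp.pow_right (n := n)).dvd_of_dvd_mul_right ⟨u', hpq.symm⟩

lemma Polynomial.Monic.dvd_of_dvd_C_mul {p q : Polynomial ℤ} (hp : p.Monic) {n : ℤ} (hn : n ≠ 0)
    (h : p ∣ Polynomial.C n * q) : p ∣ q := by
  rw [← Polynomial.map_dvd_map (Int.castRingHom ℚ) Int.cast_injective hp]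
  have hunit : IsUnit (Polynomial.C (n : ℚ)) :=
    Polynomial.isUnit_C.mpr (isUnit_iff_ne_zero.mpr (by exact_mod_cast hn))
  rw [← hunit.dvd_mul_left]
  simpa using Polynomial.map_dvd (Int.castRingHom ℚ) h

lemma one_add_T_dvd_of_dvd_one_sub_T_mul {M : ℕ} (hM : 0 < M) {t : Rq}
    (h : 1 + T M ∣ (1 - T M) * t) : 1 + T M ∣ t := by
  obtain ⟨n, tp, htp⟩ := exists_T_pow t
  have hp : (1 + T M : Rq) = Polynomial.toLaurent (1 + Polynomial.X ^ M) := by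
    rw [map_add, map_one, Polynomial.toLaurent_X_pow]
  have hmonic : (1 + Polynomial.X ^ M : Polynomial ℤ).Monic := by
    rw [add_comm]; exact Polynomial.monic_X_pow_add (by simpa using hM)
  have hcop : IsCoprime (1 + Polynomial.X ^ M : Polynomial ℤ) Polynomial.X :=
    ⟨1, -Polynomial.X ^ (M - 1), by rw [neg_mul, ← pow_succ, Nat.sub_add_cancel hM]; ring⟩
  have h2 : (1 + T M : Rq) ∣ Polynomial.toLaurent (Polynomial.C 2 * tp) := by
    rw [map_mul, Polynomial.toLaurent_C, htp, map_ofNat]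
    have : (2 : Rq) * t = (1 - T M) * t + (1 + T M) * t := by ring
    rw [← mul_assoc, this]
    exact (dvd_add h (dvd_mul_right _ t)).mul_right _
  rw [hp] at h2 ⊢
  have := hmonic.dvd_of_dvd_C_mul two_ne_zero
    (Polynomial.dvd_of_toLaurent_dvd_toLaurent hcop h2)
  rw [← (isUnit_T (n : ℤ)).dvd_mul_right, ← htp]
  exact map_dvd Polynomial.toLaurent this

lemma two_mul_sum_range_add (c : ℤ) (k : ℕ) :
    2 * ∑ i ∈ Finset.range k, (c + i) = k * (2 * c + k - 1) := by
  induction k with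
  | zero => simp
  | succ k ih => rw [Finset.sum_range_succ, mul_add, ih]; push_cast; ring

section Divisibility

variable (a : ℤ)

lemma dvd_lamPoch_sub_lamPoch {D D' : Rq} {k : ℕ} (hD : D ∣ (1 - T (k + 1)) * D')
    (h : ∀ c j, D' ∣ lamPoch a c k j) (c d : ℤ) :
    D ∣ lamPoch a c (k + 1) 0 - lamPoch a d (k + 1) 0 := by
  have hstep : ∀ c, D ∣ lamPoch a (c + 1) (k + 1) 0 - lamPoch a c (k + 1) 0 := by
    intro c
    have heq : lamPoch a (c + 1) (k + 1) 0 - lamPoch a c (k + 1) 0 =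
        T c * ((1 - T (k + 1)) * lamPoch a (c + 1) k (0 + 1)) := by
      rw [lamPoch_succ a (c + 1), lamPoch_succ' a c, show c + 1 + k = c + (k + 1) by ring, T_add]
      ring
    rw [heq]
    exact (hD.trans (mul_dvd_mul_left _ (h _ _))).mul_left _
  let π := Ideal.Quotient.mk (Ideal.span {D})
  have hper : Function.Periodic (fun c => π (lamPoch a c (k + 1) 0)) 1 := fun c =>
    Ideal.Quotient.eq.mpr (Ideal.mem_span_singleton.mpr (hstep c))
  have hcd := (hper.int_mul_eq c).trans (hper.int_mul_eq d).symm
  simp only [mul_one] at hcd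
  exact Ideal.mem_span_singleton.mp (Ideal.Quotient.eq.mp hcd)

lemma dvd_lamPoch_of_dvd_lamPoch {D D' : Rq} {k : ℕ} (hD : D ∣ (1 - T (k + 1)) * D')
    (h : ∀ c j, D' ∣ lamPoch a c k j) {c₀ : ℤ} (h₀ : D ∣ lamPoch a c₀ (k + 1) 0) (c j : ℤ) :
    D ∣ lamPoch a c (k + 1) j := by
  rw [lamPoch_eq_T_mul_lamPoch]
  refine Dvd.dvd.mul_left ?_ _
  simpa using dvd_add (dvd_lamPoch_sub_lamPoch a hD h _ c₀) h₀

/-- At the fixed point `c₀` of the symmetry `lamPoch_symm` the sign is `-1` and the power of `q` is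
trivial, so `Λ((q^{c₀}z;q)_{2m+1}) = 0`. -/
lemma qPoch_dvd_lamPoch_two_mul_add_one (m : ℕ)
    (h : ∀ c j, qPoch (m + 1) m ∣ lamPoch a c (2 * m) j) (c j : ℤ) :
    qPoch (m + 1) (m + 1) ∣ lamPoch a c (2 * m + 1) j := by
  set c₀ : ℤ := -m - a * (2 * m + 1)
  have hexp : ∑ i ∈ Finset.range (2 * m + 1), (c₀ + i) + a * ((2 * m + 1 : ℕ) : ℤ) ^ 2 = 0 := by
    have := two_mul_sum_range_add c₀ (2 * m + 1)
    push_cast at this ⊢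
    linarith
  have hzero : lamPoch a c₀ (2 * m + 1) 0 = 0 := by
    have hs := lamPoch_symm a c₀ (2 * m + 1)
    rw [hexp, T_zero, mul_one, Odd.neg_one_pow ⟨m, rfl⟩,
      show -c₀ - ((2 * m + 1 : ℕ) : ℤ) + 1 - 2 * a * ((2 * m + 1 : ℕ) : ℤ) = c₀ by push_cast; ring]
      at hs
    have h2 : (2 : Rq) ≠ 0 := fun h2 => by simpa using congrArg (fun p : Rq => p.coeff 0) h2
    exact (mul_eq_zero.mp (by linear_combination hs)).resolve_left h2
  have hD : qPoch (m + 1) (m + 1) ∣ (1 - T ((2 * m : ℕ) + 1)) * qPoch (m + 1) m := by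
    rw [qPoch_succ, mul_comm, show ((m : ℤ) + 1 + m) = (2 * m : ℕ) + 1 by push_cast; ring]
  exact dvd_lamPoch_of_dvd_lamPoch a hD h (hzero ▸ dvd_zero _) c j

/-- The symmetry `lamPoch_symm` pairs `c₀` with `c₀ - 1` at the cost of a factor `q^{m+1}`; this
gives the factor `1 - q^{m+1}` times `Λ`, which has to be cancelled against
`qPoch (m + 2) (m + 1) = (1 + q^{m+1}) qPoch (m + 1) (m + 1)`. -/
lemma qPoch_dvd_lamPoch_two_mul_add_two (m : ℕ)
    (h : ∀ c j, qPoch (m + 1) (m + 1) ∣ lamPoch a c (2 * m + 1) j) (c j : ℤ) :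
    qPoch (m + 2) (m + 1) ∣ lamPoch a c (2 * m + 2) j := by
  set c₀ : ℤ := -m - 2 * a * (m + 1)
  have hexp : ∑ i ∈ Finset.range (2 * m + 2), (c₀ + i) + a * ((2 * m + 2 : ℕ) : ℤ) ^ 2 = m + 1 := by
    have := two_mul_sum_range_add c₀ (2 * m + 2)
    push_cast at this ⊢
    linarith
  have hsymm : lamPoch a c₀ (2 * m + 2) 0 = T (m + 1) * lamPoch a (c₀ - 1) (2 * m + 2) 0 := by
    rw [lamPoch_symm, hexp, Even.neg_one_pow ⟨m + 1, by ring⟩, one_mul,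
      show -c₀ - ((2 * m + 2 : ℕ) : ℤ) + 1 - 2 * a * ((2 * m + 2 : ℕ) : ℤ) = c₀ - 1 by
        push_cast; ring]
  have hD : qPoch (m + 2) (m + 1) ∣ (1 - T ((2 * m + 1 : ℕ) + 1)) * qPoch (m + 1) (m + 1) := by
    rw [qPoch_add_two_eq_one_add_T_mul, show (((2 * m + 1 : ℕ) : ℤ) + 1) = (m + 1) + (m + 1) by
      push_cast; ring, one_sub_T_add_self]
    exact ⟨1 - T (m + 1), by ring⟩
  obtain ⟨t, ht⟩ : qPoch (m + 1) (m + 1) ∣ lamPoch a (c₀ - 1) (2 * m + 2) 0 := by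
    rw [lamPoch_succ]
    exact dvd_sub (h _ _) ((h _ _).mul_left _)
  have hcong := dvd_lamPoch_sub_lamPoch a hD h (c₀ - 1) c₀
  rw [hsymm, ← one_sub_mul, ht, qPoch_add_two_eq_one_add_T_mul, mul_comm (1 + _), mul_left_comm,
    mul_dvd_mul_iff_left (qPoch_ne_zero (by omega) _)] at hcong
  obtain ⟨u, rfl⟩ : 1 + T (m + 1) ∣ t := by
    exact_mod_cast one_add_T_dvd_of_dvd_one_sub_T_mul (M := m + 1) (by omega)
      (by exact_mod_cast hcong)
  refine dvd_lamPoch_of_dvd_lamPoch a hD h (c₀ := c₀) ?_ c j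
  rw [hsymm, ht, qPoch_add_two_eq_one_add_T_mul]
  exact ⟨T (m + 1) * u, by ring⟩

lemma qPoch_dvd_lamPoch (m : ℕ) (c j : ℤ) : qPoch (m + 1) (m + 1) ∣ lamPoch a c (2 * m + 1) j := by
  induction m generalizing c j with
  | zero => exact qPoch_dvd_lamPoch_two_mul_add_one a 0 (fun _ _ => by simp [qPoch]) c j
  | succ m ih =>
    refine qPoch_dvd_lamPoch_two_mul_add_one a (m + 1) (fun c j => ?_) c j
    convert qPoch_dvd_lamPoch_two_mul_add_two a m ih c j using 2
    all_goals push_cast; ring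

end Divisibility

/-- For `Q₀(n) = a₂ n²` and any `f`, `Λ_{Q₀}((q^{-l}z;q)_{2l+1}·f)` is divisible by
`(q^{l+1};q)_{l+1}` in `ℤ[q^{±1}]`. -/
theorem stmt_2 (a₂ : ℤ) (l : ℕ) (f : Rzq) :
    (∏ i ∈ Finset.range (l + 1), (1 - T ((l : ℤ) + 1 + (i : ℤ)) : Rq)) ∣
      Lam (fun n => a₂ * n ^ 2) (pochZ (-(l : ℤ)) (2 * l + 1) * f) :=
  dvd_Lam_mul_of_forall_dvd_Lam_mul_T _ (qPoch_dvd_lamPoch a₂ l (-l)) f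
end
end

section
/- For every positive integer k and every integral quadratic form Q, the element X_k divides Σ_{j=0}^{k} (-1)^j·binomq(k,j)·q^{Q(j) + j(j-1)/2} in the Laurent polynomial ring ℤ[q^{±1}]. -/
open LaurentPolynomial

noncomputable section

/-- The field `ℚ(q)` of rational functions in `q` over `ℚ`. -/
abbrev Kq := RatFunc ℚ

/-- The variable `q` viewed inside `ℚ(q)`. -/
def qK : Kq := RatFunc.X

/-- The canonical embedding of `ℤ[q^{±1}]` into `ℚ(q)`, sending `q^i ↦ q^i`. -/
def mapRq (f : Rq) : Kq := Finsupp.sum f.coeff fun i c => (c : Kq) * qK ^ i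

/-- `X_k = ∏_{j=⌊k/2⌋+1}^{k} (1 - q^j)` as an element of `ℤ[q^{±1}]`. -/
def Xk (k : ℕ) : Rq := ∏ j ∈ Finset.Icc (k / 2 + 1) k, (1 - T (j : ℤ))

/-- The Gaussian binomial coefficient `binomq(m,n) = (q^{m-n+1};q)_n / (q;q)_n`,
viewed inside `ℚ(q)` (it actually lies in `ℤ[q^{±1}]`). -/
def binomK (m : ℤ) (n : ℕ) : Kq :=
  (∏ i ∈ Finset.range n, (1 - qK ^ (m - (n : ℤ) + 1 + (i : ℤ)))) /
    (∏ i ∈ Finset.range n, (1 - qK ^ (i + 1)))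

/-- An integral quadratic form `Q(n) = a₂ n² + a₁ n + a₀`. -/
def IsIntegralQuadraticForm (Q : ℤ → ℤ) : Prop :=
  ∃ a₂ a₁ a₀ : ℤ, ∀ n : ℤ, Q n = a₂ * n ^ 2 + a₁ * n + a₀

/-!
Put `S_k(A, B) = ∑_j (-1)^j [k, j]_q q^{A·C(j,2) + B·j}`. As `Q(j) + C(j,2)` equals
`(2a₂+1)·C(j,2) + (a₂+a₁)·j + a₀`, the sum in question is `q^{a₀} S_k(2a₂+1, a₂+a₁)`, so it
suffices to show `X_k ∣ S_k(A, B)` for odd `A`, by induction on `k`.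

By the `q`-Pascal rule, `S_{k+1}(A, B+1) - S_{k+1}(A, B) = q^B (1 - q^{k+1}) S_k(A, A+B)`, and
`X_{k+1} ∣ (1 - q^{k+1}) X_k`; hence modulo `X_{k+1}` the sum `S_{k+1}(A, B)` does not depend
on `B`. The symmetry `[k, j] = [k, k-j]` gives
`S_k(A, B) = (-1)^k q^{A·C(k,2) + Bk} S_k(A, -A(k-1) - B)`.
For odd `k` this forces `S_k(A, -A(k-1)/2) = 0`. For `k = 2m+2` it shows that
`X_k ∣ (1 - q^e) S_k(A, B)` for every `e` in the subgroup generated by `k` and `A·C(k,2)`, which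
contains `m+1` because `A` is odd. Pascal's rule also gives `X_{k-1} ∣ S_k(A, B)`, and since
`1 - q^{m+1}` and `1 + q^{m+1}` can only share the prime factor `2`, which divides neither, the
two divisibilities combine to `X_k ∣ S_k(A, B)`.
-/

open Finset

theorem Nat.cast_choose_two_succ (n : ℕ) : ((n + 1).choose 2 : ℤ) = n.choose 2 + n := by
  rw [Nat.choose_succ_succ', Nat.choose_one_right, Nat.cast_add, add_comm]

theorem Nat.two_mul_cast_choose_two (n : ℕ) : 2 * (n.choose 2 : ℤ) = n * (n - 1) := by
  induction n with
  | zero => simp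
  | succ n ih => rw [Nat.cast_choose_two_succ]; push_cast; linear_combination ih

theorem Nat.cast_choose_two_sub {k j : ℕ} (hj : j ≤ k) :
    ((k - j).choose 2 : ℤ) = k.choose 2 + j.choose 2 + j - k * j := by
  have h := Nat.two_mul_cast_choose_two (k - j)
  rw [Nat.cast_sub hj] at h
  have h' : 2 * ((k - j).choose 2 : ℤ) = 2 * (k.choose 2 + j.choose 2 + j - k * j) := by
    linear_combination h - Nat.two_mul_cast_choose_two k - Nat.two_mul_cast_choose_two j
  exact mul_left_cancel₀ two_ne_zero h'

namespace LaurentPolynomial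

section Basic

variable {R : Type*}

theorem T_ne_one [Semiring R] [Nontrivial R] {n : ℤ} (hn : n ≠ 0) : (T n : R[T;T⁻¹]) ≠ 1 := by
  intro h
  have := congrArg degree h
  rw [← T_zero, degree_T, degree_T] at this
  exact hn (WithBot.coe_injective this)

theorem one_sub_T_ne_zero [Ring R] [Nontrivial R] {n : ℤ} (hn : n ≠ 0) :
    (1 - T n : R[T;T⁻¹]) ≠ 0 :=
  sub_ne_zero.mpr (T_ne_one hn).symm

theorem coeff_one_add_T_zero [Semiring R] {n : ℤ} (hn : n ≠ 0) :
    (1 + T n : R[T;T⁻¹]).coeff 0 = 1 := by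
  rw [AddMonoidAlgebra.coeff_add, Finsupp.add_apply, ← T_zero, T, T]
  simp [hn]

theorem prime_C [CommRing R] [IsDomain R] {p : R} (hp : Prime p) : Prime (C p : R[T;T⁻¹]) := by
  have hCp : Prime (Polynomial.C p) := Polynomial.prime_C_iff.mpr hp
  have hdisj : Disjoint (Submonoid.powers (Polynomial.X : Polynomial R) : Set (Polynomial R))
      (Ideal.span {Polynomial.C p} : Set (Polynomial R)) := by
    rw [Set.disjoint_left]
    rintro _ ⟨n, rfl⟩ hmem
    obtain ⟨g, hg⟩ := hCp.dvd_of_dvd_pow (Ideal.mem_span_singleton.mp hmem)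
    have h1 := congrArg (Polynomial.coeff · 1) hg
    simp only [Polynomial.coeff_X_one, Polynomial.coeff_C_mul] at h1
    exact hp.not_isUnit (IsUnit.of_mul_eq_one _ h1.symm)
  have hprime := IsLocalization.isPrime_of_isPrime_disjoint _ R[T;T⁻¹] _
    ((Ideal.span_singleton_prime hCp.ne_zero).mpr hCp) hdisj
  rw [Ideal.map_span, Set.image_singleton, algebraMap_eq_toLaurent,
    Polynomial.toLaurent_C] at hprime
  have hC0 : (C p : R[T;T⁻¹]) ≠ 0 := by
    simpa only [Polynomial.toLaurent_C] using Polynomial.toLaurent_ne_zero.mpr hCp.ne_zero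
  exact (Ideal.span_singleton_prime hC0).mp hprime

end Basic

theorem prime_two : Prime (2 : ℤ[T;T⁻¹]) := by
  simpa using prime_C Int.prime_two

section QBinomial

variable {R : Type*} [CommRing R]

/-- The `q`-Pochhammer symbol `(q^a; q)_n`. -/
def qPochhammer (a : ℤ) (n : ℕ) : R[T;T⁻¹] := ∏ i ∈ range n, (1 - T (a + i))

def qBinom : ℕ → ℕ → R[T;T⁻¹]
  | _, 0 => 1
  | 0, _ + 1 => 0
  | k + 1, j + 1 => qBinom k j + T (j + 1) * qBinom k (j + 1)

@[simp]
theorem qBinom_zero_right (k : ℕ) : (qBinom k 0 : R[T;T⁻¹]) = 1 := by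
  cases k <;> rfl

theorem qBinom_succ_succ (k j : ℕ) :
    (qBinom (k + 1) (j + 1) : R[T;T⁻¹]) = qBinom k j + T (j + 1) * qBinom k (j + 1) :=
  rfl

theorem qBinom_eq_zero_of_lt : ∀ {k j : ℕ}, k < j → (qBinom k j : R[T;T⁻¹]) = 0
  | 0, _ + 1, _ => rfl
  | k + 1, j + 1, h => by
    rw [qBinom_succ_succ, qBinom_eq_zero_of_lt (by omega : k < j),
      qBinom_eq_zero_of_lt (by omega : k < j + 1), mul_zero, add_zero]

theorem qPochhammer_succ (a : ℤ) (n : ℕ) :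
    (qPochhammer a (n + 1) : R[T;T⁻¹]) = qPochhammer a n * (1 - T (a + n)) :=
  prod_range_succ _ _

theorem qPochhammer_succ' (a : ℤ) (n : ℕ) :
    (qPochhammer a (n + 1) : R[T;T⁻¹]) = (1 - T a) * qPochhammer (a + 1) n := by
  rw [qPochhammer, prod_range_succ', mul_comm, qPochhammer]
  simp only [Nat.cast_add, Nat.cast_one, Nat.cast_zero, add_zero]
  congr 1
  exact prod_congr rfl fun i _ => by rw [add_comm (i : ℤ) 1, add_assoc]

theorem qPochhammer_add (a : ℤ) (m n : ℕ) :
    (qPochhammer a (m + n) : R[T;T⁻¹]) = qPochhammer a m * qPochhammer (a + m) n := by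
  rw [qPochhammer, prod_range_add, qPochhammer, qPochhammer]
  simp only [Nat.cast_add, add_assoc]

theorem qPochhammer_ne_zero [IsDomain R] {a : ℤ} (ha : 0 < a) (n : ℕ) :
    (qPochhammer a n : R[T;T⁻¹]) ≠ 0 :=
  prod_ne_zero_iff.mpr fun i _ => one_sub_T_ne_zero (by omega)

/-- Both sides vanish when `k < j`. -/
theorem qBinom_mul_qPochhammer (k j : ℕ) :
    (qBinom k j * qPochhammer 1 j : R[T;T⁻¹]) = qPochhammer (k - j + 1) j := by
  induction k generalizing j with
  | zero =>
    cases j with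
    | zero => simp [qPochhammer]
    | succ i => simp [qBinom, qPochhammer_succ]
  | succ K ih =>
    cases j with
    | zero => simp [qPochhammer]
    | succ i =>
      have h₂ : (qBinom K (i + 1) * qPochhammer 1 (i + 1) : R[T;T⁻¹]) =
          (1 - T (K - i)) * qPochhammer (K - i + 1) i := by
        rw [ih, qPochhammer_succ', show (K : ℤ) - (i + 1 : ℕ) + 1 = K - i by push_cast; ring]
      have hT : (T (i + 1) * T (K - i) : R[T;T⁻¹]) = T (K + 1) := by
        rw [← T_add]; congr 1; ring
      rw [show ((K + 1 : ℕ) : ℤ) - (i + 1 : ℕ) + 1 = K - i + 1 by push_cast; ring]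
      calc (qBinom (K + 1) (i + 1) * qPochhammer 1 (i + 1) : R[T;T⁻¹])
          = qBinom K i * qPochhammer 1 i * (1 - T (1 + i)) +
              T (i + 1) * (qBinom K (i + 1) * qPochhammer 1 (i + 1)) := by
            rw [qBinom_succ_succ, qPochhammer_succ 1 i]; ring
        _ = qPochhammer (K - i + 1) i * (1 - T (K + 1)) := by
            rw [ih, h₂, ← hT, add_comm (1 : ℤ) i]; ring
        _ = qPochhammer (K - i + 1) (i + 1) := by
            rw [qPochhammer_succ]; congr 3; ring

theorem qBinom_succ_mul_qPochhammer (k j : ℕ) :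
    (qBinom k (j + 1) * qPochhammer 1 (j + 1) : R[T;T⁻¹]) =
      (1 - T (k - j)) * qPochhammer (k - j + 1) j := by
  rw [qBinom_mul_qPochhammer, qPochhammer_succ',
    show (k : ℤ) - (j + 1 : ℕ) + 1 = k - j by push_cast; ring]

theorem qBinom_succ_succ_mul_qPochhammer (k j : ℕ) :
    (qBinom (k + 1) (j + 1) * qPochhammer 1 (j + 1) : R[T;T⁻¹]) =
      qPochhammer (k - j + 1) j * (1 - T (k + 1)) := by
  rw [qBinom_mul_qPochhammer, qPochhammer_succ,
    show ((k + 1 : ℕ) : ℤ) - (j + 1 : ℕ) + 1 = k - j + 1 by push_cast; ring]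
  congr 3; ring

variable [IsDomain R]

theorem qBinom_succ_succ' (k j : ℕ) :
    (qBinom (k + 1) (j + 1) : R[T;T⁻¹]) = qBinom k (j + 1) + T (k - j) * qBinom k j := by
  refine mul_right_cancel₀ (qPochhammer_ne_zero one_pos (j + 1)) ?_
  have hT : (T (k - j) * T (1 + j) : R[T;T⁻¹]) = T (k + 1) := by
    rw [← T_add]; congr 1; ring
  rw [qBinom_succ_succ_mul_qPochhammer, add_mul, qBinom_succ_mul_qPochhammer, mul_assoc,
    qPochhammer_succ, ← mul_assoc (qBinom k j), qBinom_mul_qPochhammer, ← hT]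
  ring

theorem one_sub_T_mul_qBinom_succ_succ (k j : ℕ) :
    ((1 - T (j + 1)) * qBinom (k + 1) (j + 1) : R[T;T⁻¹]) = (1 - T (k + 1)) * qBinom k j := by
  refine mul_right_cancel₀ (qPochhammer_ne_zero one_pos j) ?_
  calc ((1 - T (j + 1)) * qBinom (k + 1) (j + 1) * qPochhammer 1 j : R[T;T⁻¹])
      = qBinom (k + 1) (j + 1) * qPochhammer 1 (j + 1) := by
        rw [qPochhammer_succ, add_comm (1 : ℤ) j]; ring
    _ = (1 - T (k + 1)) * qBinom k j * qPochhammer 1 j := by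
        rw [qBinom_succ_succ_mul_qPochhammer, mul_assoc, qBinom_mul_qPochhammer, mul_comm]

theorem qBinom_symm {k j : ℕ} (hj : j ≤ k) :
    (qBinom k (k - j) : R[T;T⁻¹]) = qBinom k j := by
  refine mul_right_cancel₀ (mul_ne_zero (qPochhammer_ne_zero one_pos (k - j))
    (qPochhammer_ne_zero one_pos j)) ?_
  have h₁ : (qPochhammer 1 k : R[T;T⁻¹]) = qPochhammer 1 (k - j) * qPochhammer (k - j + 1) j := by
    rw [← Nat.cast_sub hj, add_comm _ (1 : ℤ), ← qPochhammer_add, Nat.sub_add_cancel hj]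
  have h₂ : (qPochhammer 1 k : R[T;T⁻¹]) = qPochhammer 1 j * qPochhammer (j + 1) (k - j) := by
    rw [add_comm _ (1 : ℤ), ← qPochhammer_add, Nat.add_sub_cancel' hj]
  calc (qBinom k (k - j) * (qPochhammer 1 (k - j) * qPochhammer 1 j) : R[T;T⁻¹])
      = qPochhammer (k - (k - j : ℕ) + 1) (k - j) * qPochhammer 1 j := by
        rw [← mul_assoc, qBinom_mul_qPochhammer]
    _ = qBinom k j * qPochhammer 1 j * qPochhammer 1 (k - j) := by
        rw [Nat.cast_sub hj, sub_sub_cancel, mul_comm, ← h₂, h₁, qBinom_mul_qPochhammer, mul_comm]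
    _ = _ := by ring

end QBinomial

section QBinomSum

variable {R : Type*} [CommRing R]

def qBinomSum (k : ℕ) (A B : ℤ) : R[T;T⁻¹] :=
  ∑ j ∈ range (k + 1), (-1) ^ j * qBinom k j * T (A * j.choose 2 + B * j)

variable [IsDomain R]

theorem qBinomSum_succ_add_one_sub (k : ℕ) (A B : ℤ) :
    (qBinomSum (k + 1) A (B + 1) - qBinomSum (k + 1) A B : R[T;T⁻¹]) =
      T B * (1 - T (k + 1)) * qBinomSum k A (A + B) := by
  rw [qBinomSum, qBinomSum, ← sum_sub_distrib, sum_range_succ', qBinomSum, mul_sum]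
  simp only [Nat.choose_zero_succ, CharP.cast_eq_zero, mul_zero, add_zero, sub_self]
  refine sum_congr rfl fun i _ => ?_
  have e₁ : A * ((i + 1).choose 2 : ℕ) + (B + 1) * (i + 1 : ℕ) =
      B + (A * i.choose 2 + (A + B) * i) + (i + 1) := by
    rw [Nat.cast_choose_two_succ]; push_cast; ring
  have e₂ : A * ((i + 1).choose 2 : ℕ) + B * (i + 1 : ℕ) = B + (A * i.choose 2 + (A + B) * i) := by
    rw [Nat.cast_choose_two_succ]; push_cast; ring
  rw [e₁, e₂, T_add, T_add]
  linear_combination (-1) ^ i * T B * T (A * i.choose 2 + (A + B) * i) *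
    one_sub_T_mul_qBinom_succ_succ (R := R) k i

theorem qBinomSum_succ (k : ℕ) (A B : ℤ) :
    (qBinomSum (k + 1) A B : R[T;T⁻¹]) =
      qBinomSum k A B - T (k + B) * qBinomSum k A (A + B - 1) := by
  have hk : (qBinomSum k A B : R[T;T⁻¹]) =
      ∑ j ∈ range (k + 2), (-1) ^ j * qBinom k j * T (A * j.choose 2 + B * j) := by
    rw [sum_range_succ, qBinom_eq_zero_of_lt (by omega), mul_zero, zero_mul, add_zero, qBinomSum]
  suffices h : qBinomSum k A B - qBinomSum (k + 1) A B =
      (T (k + B) * qBinomSum k A (A + B - 1) : R[T;T⁻¹]) by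
    rw [← h]; ring
  rw [hk, qBinomSum, ← sum_sub_distrib, sum_range_succ', qBinomSum, mul_sum]
  simp only [qBinom_zero_right, sub_self, add_zero]
  refine sum_congr rfl fun i _ => ?_
  have e : (T (k - i) * T (A * ((i + 1).choose 2 : ℕ) + B * (i + 1 : ℕ)) : R[T;T⁻¹]) =
      T (k + B) * T (A * i.choose 2 + (A + B - 1) * i) := by
    rw [← T_add, ← T_add, Nat.cast_choose_two_succ]; congr 1; push_cast; ring
  rw [qBinom_succ_succ', pow_succ]
  linear_combination (-1) ^ i * qBinom k i * e

theorem qBinomSum_reflect (k : ℕ) (A B : ℤ) :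
    (qBinomSum k A B : R[T;T⁻¹]) =
      (-1) ^ k * T (A * k.choose 2 + B * k) * qBinomSum k A (-(A * (k - 1)) - B) := by
  rw [qBinomSum, ← sum_range_reflect, qBinomSum, mul_sum]
  refine sum_congr rfl fun j hj => ?_
  have hjk : j ≤ k := Nat.lt_succ_iff.mp (mem_range.mp hj)
  have hsign : ((-1) ^ (k - j) : R[T;T⁻¹]) = (-1) ^ k * (-1) ^ j := by
    conv_rhs => rw [← Nat.sub_add_cancel hjk]
    rw [pow_add, mul_assoc, ← pow_add, Even.neg_one_pow ⟨j, rfl⟩, mul_one]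
  have e : A * ((k - j).choose 2 : ℕ) + B * (k - j : ℕ) =
      A * k.choose 2 + B * k + (A * j.choose 2 + (-(A * (k - 1)) - B) * j) := by
    rw [Nat.cast_choose_two_sub hjk, Nat.cast_sub hjk]; ring
  rw [Nat.add_sub_cancel, hsign, qBinom_symm hjk, e, T_add]
  ring

end QBinomSum

theorem qBinomSum_two_mul_add_one (t : ℕ) (A : ℤ) :
    (qBinomSum (2 * t + 1) A (-(A * t)) : ℤ[T;T⁻¹]) = 0 := by
  have hc : ((2 * t + 1).choose 2 : ℤ) = t * (2 * t + 1) := by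
    have h2 := Nat.two_mul_cast_choose_two (2 * t + 1)
    push_cast at h2
    exact mul_left_cancel₀ two_ne_zero (by linear_combination h2)
  have h := qBinomSum_reflect (R := ℤ) (2 * t + 1) A (-(A * t))
  rw [hc, show -(A * ((2 * t + 1 : ℕ) - 1)) - -(A * t) = -(A * t) by push_cast; ring,
    show A * (t * (2 * t + 1)) + -(A * t) * (2 * t + 1 : ℕ) = 0 by push_cast; ring,
    T_zero, mul_one, Odd.neg_one_pow ⟨t, rfl⟩, neg_one_mul, eq_neg_iff_add_eq_zero,
    ← two_mul] at h
  exact (mul_eq_zero.mp h).resolve_left prime_two.ne_zero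

theorem not_two_dvd_one_add_T {n : ℤ} (hn : n ≠ 0) : ¬ (2 : ℤ[T;T⁻¹]) ∣ 1 + T n := by
  rintro ⟨g, hg⟩
  have h : (1 + T n : ℤ[T;T⁻¹]).coeff 0 = (2 * g).coeff 0 := by rw [hg]
  rw [coeff_one_add_T_zero hn, two_mul, AddMonoidAlgebra.coeff_add, Finsupp.add_apply] at h
  omega

/-- `1 ± q^n` are coprime up to the prime `2`, which divides neither. -/
theorem one_add_T_dvd_of_dvd_one_sub_T_mul {n : ℤ} (hn : n ≠ 0) {s : ℤ[T;T⁻¹]}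
    (h : 1 + T n ∣ (1 - T n) * s) : 1 + T n ∣ s := by
  obtain ⟨w, hw⟩ := h
  have h2 : 2 * s = (1 + T n) * (s + w) := by linear_combination hw
  obtain ⟨u, hu⟩ := (prime_two.dvd_or_dvd ⟨s, h2.symm⟩).resolve_left (not_two_dvd_one_add_T hn)
  exact ⟨u, mul_left_cancel₀ prime_two.ne_zero (by linear_combination h2 + (1 + T n) * hu)⟩

theorem mul_one_sub_T_two_mul_dvd {n : ℤ} (hn : n ≠ 0) {V f : ℤ[T;T⁻¹]}
    (h₁ : V * (1 - T n) ∣ f) (h₂ : V * (1 - T (2 * n)) ∣ (1 - T n) * f) :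
    V * (1 - T (2 * n)) ∣ f := by
  obtain ⟨s, rfl⟩ := h₁
  have hT : (1 - T (2 * n) : ℤ[T;T⁻¹]) = (1 - T n) * (1 + T n) := by
    rw [two_mul, T_add]; ring
  rcases eq_or_ne (V * (1 - T n)) 0 with hV | hV
  · simp [hV]
  rw [hT, ← mul_assoc, mul_left_comm] at h₂
  rw [hT, ← mul_assoc]
  exact mul_dvd_mul_left _
    (one_add_T_dvd_of_dvd_one_sub_T_mul hn ((mul_dvd_mul_iff_left hV).mp h₂))

def dvdExponents {R : Type*} [CommRing R] (X f : R[T;T⁻¹]) : AddSubgroup ℤ where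
  carrier := {e | X ∣ (1 - T e) * f}
  zero_mem' := by simp [T_zero]
  add_mem' {a b} ha hb := by
    have e : (1 - T (a + b)) * f = (1 - T a) * f + T a * ((1 - T b) * f) := by rw [T_add]; ring
    simpa only [Set.mem_ofPred_eq, e] using dvd_add ha (dvd_mul_of_dvd_right hb _)
  neg_mem' {a} ha := by
    have e : (1 - T (-a)) * f = -T (-a) * ((1 - T a) * f) := by
      have h : (T (-a) * T a : R[T;T⁻¹]) = 1 := by rw [← T_add, neg_add_cancel, T_zero]
      linear_combination (-f) * h
    simpa only [Set.mem_ofPred_eq, e] using dvd_mul_of_dvd_right ha _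

end LaurentPolynomial

theorem Xk_zero : Xk 0 = 1 := rfl

theorem Xk_succ_dvd (k : ℕ) : Xk (k + 1) ∣ (1 - T (k + 1)) * Xk k := by
  rw [Xk, Xk, mul_comm, ← Nat.cast_succ, ← prod_Icc_succ_top (by omega)]
  exact prod_dvd_prod_of_subset _ _ _ (Icc_subset_Icc (by omega) le_rfl)

theorem Xk_two_mul_add_one (m : ℕ) :
    Xk (2 * m + 1) = (∏ j ∈ Icc (m + 2) (2 * m + 1), (1 - T (j : ℤ))) * (1 - T (m + 1)) := by
  rw [Xk, show (2 * m + 1) / 2 + 1 = m + 1 by omega,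
    ← insert_Icc_add_one_left_eq_Icc (by omega : m + 1 ≤ 2 * m + 1), prod_insert (by simp),
    mul_comm, Nat.cast_succ]
  rfl

theorem Xk_two_mul_add_two (m : ℕ) :
    Xk (2 * m + 2) = (∏ j ∈ Icc (m + 2) (2 * m + 1), (1 - T (j : ℤ))) * (1 - T (2 * (m + 1))) := by
  rw [Xk, show (2 * m + 2) / 2 + 1 = m + 2 by omega, prod_Icc_succ_top (by omega),
    show ((2 * m + 1 + 1 : ℕ) : ℤ) = 2 * (m + 1) by push_cast; ring]

section Induction

variable {A : ℤ} {K : ℕ}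

theorem Xk_succ_dvd_qBinomSum_sub (ih : ∀ B, Xk K ∣ qBinomSum K A B) (B₁ B₂ : ℤ) :
    Xk (K + 1) ∣ qBinomSum (K + 1) A B₁ - qBinomSum (K + 1) A B₂ := by
  have step : ∀ B, Xk (K + 1) ∣ qBinomSum (K + 1) A (B + 1) - qBinomSum (K + 1) A B := fun B => by
    rw [qBinomSum_succ_add_one_sub, mul_assoc]
    exact dvd_mul_of_dvd_right ((Xk_succ_dvd K).trans (mul_dvd_mul_left _ (ih _))) _
  obtain ⟨d, rfl⟩ : ∃ d, B₁ = B₂ + d := ⟨B₁ - B₂, by ring⟩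
  induction d using Int.induction_on with
  | zero => simp
  | succ d hd =>
    rw [← add_assoc, ← sub_add_sub_cancel _ (qBinomSum (K + 1) A (B₂ + d))]
    exact dvd_add (step _) hd
  | pred d hd =>
    have h := dvd_sub hd (step (B₂ + (-d - 1)))
    rwa [show B₂ + (-d - 1) + 1 = B₂ + -d by ring, sub_sub_sub_cancel_left] at h

theorem Xk_dvd_qBinomSum_two_mul_add_one {t : ℕ} (ih : ∀ B, Xk (2 * t) ∣ qBinomSum (2 * t) A B)
    (B : ℤ) : Xk (2 * t + 1) ∣ qBinomSum (2 * t + 1) A B := by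
  have h := Xk_succ_dvd_qBinomSum_sub ih B (-(A * t))
  rwa [qBinomSum_two_mul_add_one, sub_zero] at h

theorem Xk_dvd_one_sub_T_mul_qBinomSum {m : ℕ}
    (ih : ∀ B, Xk (2 * m + 1) ∣ qBinomSum (2 * m + 1) A B) (B B' : ℤ) :
    Xk (2 * m + 2) ∣
      (1 - T (A * (2 * m + 2).choose 2 + B' * (2 * m + 2 : ℕ))) * qBinomSum (2 * m + 2) A B := by
  have hrefl := qBinomSum_reflect (R := ℤ) (2 * m + 2) A B'
  rw [Even.neg_one_pow ⟨m + 1, by ring⟩, one_mul] at hrefl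
  have hsub := Xk_succ_dvd_qBinomSum_sub ih
  rw [show (1 - T (A * (2 * m + 2).choose 2 + B' * (2 * m + 2 : ℕ))) * qBinomSum (2 * m + 2) A B =
      (qBinomSum (2 * m + 2) A B - qBinomSum (2 * m + 2) A B') +
        T (A * (2 * m + 2).choose 2 + B' * (2 * m + 2 : ℕ)) *
          (qBinomSum (2 * m + 2) A (-(A * ((2 * m + 2 : ℕ) - 1)) - B') -
            qBinomSum (2 * m + 2) A B) by linear_combination hrefl]
  exact dvd_add (hsub _ _) (dvd_mul_of_dvd_right (hsub _ _) _)

theorem Xk_dvd_qBinomSum_two_mul_add_two {m : ℕ} (hA : Odd A)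
    (ih : ∀ B, Xk (2 * m + 1) ∣ qBinomSum (2 * m + 1) A B) (B : ℤ) :
    Xk (2 * m + 2) ∣ qBinomSum (2 * m + 2) A B := by
  obtain ⟨a, rfl⟩ := hA
  set E := dvdExponents (Xk (2 * m + 2)) (qBinomSum (2 * m + 2) (2 * a + 1) B)
  have hmem (B' : ℤ) : (2 * a + 1) * (2 * m + 2).choose 2 + B' * (2 * m + 2 : ℕ) ∈ E :=
    Xk_dvd_one_sub_T_mul_qBinomSum ih B B'
  have hk : ((2 * m + 2 : ℕ) : ℤ) ∈ E := by
    simpa using sub_mem (hmem 1) (hmem 0)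
  have hm : (m + 1 : ℤ) ∈ E := by
    have hc : ((2 * m + 2).choose 2 : ℤ) = (m + 1) * (2 * m + 1) := by
      have h2 := Nat.two_mul_cast_choose_two (2 * m + 2)
      push_cast at h2
      exact mul_left_cancel₀ two_ne_zero (by linear_combination h2)
    have e : (m + 1 : ℤ) = (2 * a + 1) * (2 * m + 2).choose 2 + 0 * (2 * m + 2 : ℕ) -
        (2 * a * m + a + m) • ((2 * m + 2 : ℕ) : ℤ) := by
      rw [hc, smul_eq_mul]; push_cast; ring
    rw [e]
    exact sub_mem (hmem 0) (zsmul_mem hk _)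
  rw [Xk_two_mul_add_two]
  refine mul_one_sub_T_two_mul_dvd (by omega) ?_ (by rwa [← Xk_two_mul_add_two])
  rw [← Xk_two_mul_add_one, qBinomSum_succ]
  exact dvd_sub (ih B) (dvd_mul_of_dvd_right (ih _) _)

end Induction

theorem Xk_dvd_qBinomSum (k : ℕ) {A : ℤ} (hA : Odd A) (B : ℤ) : Xk k ∣ qBinomSum k A B := by
  induction k generalizing B with
  | zero => rw [Xk_zero]; exact one_dvd _
  | succ K ih =>
    obtain ⟨m, rfl | rfl⟩ := Nat.even_or_odd' K
    · exact Xk_dvd_qBinomSum_two_mul_add_one ih B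
    · exact Xk_dvd_qBinomSum_two_mul_add_two hA ih B

theorem qK_ne_zero : qK ≠ 0 := RatFunc.X_ne_zero

theorem one_sub_qK_pow_ne_zero {n : ℕ} (hn : n ≠ 0) : 1 - qK ^ n ≠ 0 := by
  have h : (1 - Polynomial.X ^ n : Polynomial ℚ) ≠ 0 := by
    rw [← neg_ne_zero, neg_sub, ← Polynomial.C_1]
    exact Polynomial.X_pow_sub_C_ne_zero (Nat.pos_of_ne_zero hn) 1
  rw [qK, ← RatFunc.algebraMap_X, ← map_pow, ← map_one (algebraMap (Polynomial ℚ) _), ← map_sub]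
  exact (map_ne_zero_iff _ (RatFunc.algebraMap_injective ℚ)).mpr h

abbrev evalQ : Rq →+* Kq := eval₂ (Int.castRingHom Kq) (Units.mk0 qK qK_ne_zero)

theorem evalQ_T (n : ℤ) : evalQ (T n) = qK ^ n := by
  rw [eval₂_T, Units.val_zpow_eq_zpow_val]; rfl

theorem mapRq_eq_evalQ (f : Rq) : mapRq f = evalQ f := by
  induction f using LaurentPolynomial.induction_on' with
  | add p q hp hq =>
    rw [map_add, ← hp, ← hq, mapRq, mapRq, mapRq, AddMonoidAlgebra.coeff_add]
    exact Finsupp.sum_add_index' (by simp) (by intros; push_cast; ring)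
  | C_mul_T n r =>
    rw [← single_eq_C_mul_T, mapRq, AddMonoidAlgebra.coeff_single,
      Finsupp.sum_single_index (by simp), single_eq_C_mul_T, map_mul, evalQ_T, eval₂_C, eq_intCast]

theorem evalQ_qPochhammer (a : ℤ) (n : ℕ) :
    evalQ (qPochhammer a n) = ∏ i ∈ range n, (1 - qK ^ (a + i)) := by
  simp only [qPochhammer, map_prod, map_sub, map_one, evalQ_T]

theorem binomK_eq_evalQ_qBinom (k j : ℕ) : binomK k j = evalQ (qBinom k j) := by
  have hD : ∏ i ∈ range j, (1 - qK ^ (i + 1)) = evalQ (qPochhammer 1 j) := by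
    rw [evalQ_qPochhammer]
    refine prod_congr rfl fun i _ => ?_
    rw [add_comm (1 : ℤ), ← Nat.cast_succ, zpow_natCast]
  have hD0 : ∏ i ∈ range j, (1 - qK ^ (i + 1)) ≠ 0 :=
    prod_ne_zero_iff.mpr fun i _ => one_sub_qK_pow_ne_zero i.succ_ne_zero
  rw [binomK, div_eq_iff hD0, hD, ← map_mul, qBinom_mul_qPochhammer, evalQ_qPochhammer]

theorem stmt_3_general (k : ℕ) (Q : ℤ → ℤ) (hQ : IsIntegralQuadraticForm Q) :
    ∃ c : Rq,
      ∑ j ∈ Finset.range (k + 1),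
          (-1 : Kq) ^ j * binomK (k : ℤ) j * qK ^ (Q (j : ℤ) + ((j * (j - 1) / 2 : ℕ) : ℤ)) =
        mapRq (Xk k) * mapRq c := by
  obtain ⟨a₂, a₁, a₀, hQ⟩ := hQ
  obtain ⟨c, hc⟩ := Xk_dvd_qBinomSum k (odd_two_mul_add_one a₂) (a₂ + a₁)
  refine ⟨T a₀ * c, ?_⟩
  rw [mapRq_eq_evalQ, mapRq_eq_evalQ, ← map_mul, mul_left_comm, ← hc, qBinomSum, mul_sum, map_sum]
  refine sum_congr rfl fun j _ => ?_
  have e : Q j + ((j * (j - 1) / 2 : ℕ) : ℤ) =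
      a₀ + ((2 * a₂ + 1) * j.choose 2 + (a₂ + a₁) * j) := by
    rw [hQ, ← Nat.choose_two_right]
    linear_combination (-a₂) * Nat.two_mul_cast_choose_two j
  simp only [e, map_mul, map_pow, map_neg, map_one, evalQ_T, binomK_eq_evalQ_qBinom,
    zpow_add₀ qK_ne_zero]
  ring

/-- For every positive integer `k` and integral quadratic form `Q`, `X_k` divides
`Σ_{j=0}^{k} (-1)^j binomq(k,j) q^{Q(j)+j(j-1)/2}` in `ℤ[q^{±1}]`. -/
theorem stmt_3 (k : ℕ) (hk : 1 ≤ k) (Q : ℤ → ℤ) (hQ : IsIntegralQuadraticForm Q) :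
    ∃ c : Rq,
      ∑ j ∈ Finset.range (k + 1),
          (-1 : Kq) ^ j * binomK (k : ℤ) j * qK ^ (Q (j : ℤ) + ((j * (j - 1) / 2 : ℕ) : ℤ)) =
        mapRq (Xk k) * mapRq c :=
  stmt_3_general k Q hQ
end
end

section
/- Let r ≥ 2 and let ξ ∈ ℂ be a primitive r-th root of unity, and set O_ξ := (ξ;ξ)_{⌊(r-1)/2⌋}. Then O_ξ² is associated in ℤ[ξ] to r if r is odd, and to r/2 if r is even. -/
noncomputable section

/-- `u` is a unit of the subring `S` of `ℂ`. -/
def IsUnitIn (S : Subring ℂ) (u : ℂ) : Prop := u ∈ S ∧ ∃ v ∈ S, u * v = 1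

/-- `x` and `y` are associates in the subring `S` of `ℂ`: `x = u y` for a unit `u` of `S`. -/
def AssociatedIn (S : Subring ℂ) (x y : ℂ) : Prop := ∃ u, IsUnitIn S u ∧ x = u * y

/-- `O_ξ = (ξ;ξ)_{⌊(r-1)/2⌋} = ∏_{j=1}^{⌊(r-1)/2⌋} (1 - ξ^j)`. -/
def OXi (ξ : ℂ) (r : ℕ) : ℂ := ∏ j ∈ Finset.Icc 1 ((r - 1) / 2), (1 - ξ ^ j)

lemma aux_unit (r : ℕ) (hr : 1 ≤ r) (ξ : ℂ) (h1 : ξ ^ r = 1) (m k : ℕ) :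
    IsUnitIn (Subring.closure {ξ}) ((-1) ^ m * ξ ^ k) := by
  have hξS : ξ ∈ Subring.closure {ξ} := Subring.subset_closure (Set.mem_singleton ξ)
  have hmem : ∀ a b : ℕ, (-1 : ℂ) ^ a * ξ ^ b ∈ Subring.closure {ξ} := fun a b =>
    Subring.mul_mem _ (Subring.pow_mem _ (Subring.neg_mem _ (Subring.one_mem _)) _)
      (Subring.pow_mem _ hξS _)
  refine ⟨hmem m k, (-1) ^ m * ξ ^ (k * (r - 1)), hmem m (k * (r - 1)), ?_⟩
  have key : ξ ^ k * ξ ^ (k * (r - 1)) = 1 := by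
    rw [← pow_add]
    have : k + k * (r - 1) = k * r := by
      conv_rhs => rw [← Nat.sub_add_cancel hr]
      rw [Nat.mul_add, mul_one, add_comm]
    rw [this, mul_comm k r, pow_mul, h1, one_pow]
  calc (-1 : ℂ) ^ m * ξ ^ k * ((-1) ^ m * ξ ^ (k * (r - 1)))
      = ((-1) ^ (2 * m)) * (ξ ^ k * ξ ^ (k * (r - 1))) := by ring
    _ = 1 := by rw [key, pow_mul]; norm_num

lemma aux_assoc (r : ℕ) (hr : 1 ≤ r) (ξ : ℂ) (h1 : ξ ^ r = 1) (m k : ℕ) (x y : ℂ)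
    (h : y = ((-1) ^ m * ξ ^ k) * x) : AssociatedIn (Subring.closure {ξ}) x y := by
  refine ⟨(-1) ^ m * ξ ^ (k * (r - 1)), aux_unit r hr ξ h1 m (k * (r - 1)), ?_⟩
  have key : ξ ^ k * ξ ^ (k * (r - 1)) = 1 := by
    rw [← pow_add]
    have : k + k * (r - 1) = k * r := by
      conv_rhs => rw [← Nat.sub_add_cancel hr]
      rw [Nat.mul_add, mul_one, add_comm]
    rw [this, mul_comm k r, pow_mul, h1, one_pow]
  rw [h]
  calc x = ((-1 : ℂ) ^ (2 * m)) * (ξ ^ k * ξ ^ (k * (r - 1))) * x := by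
        rw [key, pow_mul]; norm_num
    _ = (-1) ^ m * ξ ^ (k * (r - 1)) * ((-1) ^ m * ξ ^ k * x) := by ring

lemma aux_reflect (r m : ℕ) (ξ : ℂ) (h1 : ξ ^ r = 1) (hm : m + 1 ≤ r) :
    ∏ k ∈ Finset.range m, (1 - ξ ^ (r - m + k)) =
      ((-1) ^ m * ξ ^ (∑ k ∈ Finset.range m, (r - (k + 1)))) *
        ∏ k ∈ Finset.range m, (1 - ξ ^ (k + 1)) := by
  have step1 : ∏ k ∈ Finset.range m, (1 - ξ ^ (r - m + k)) =
      ∏ k ∈ Finset.range m, (1 - ξ ^ (r - (k + 1))) := by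
    rw [← Finset.prod_range_reflect (fun k => 1 - ξ ^ (r - m + k)) m]
    refine Finset.prod_congr rfl fun k hk => ?_
    have hk' := Finset.mem_range.mp hk
    congr 2
    omega
  have step2 : ∀ k ∈ Finset.range m,
      (1 - ξ ^ (r - (k + 1))) = (-1 * ξ ^ (r - (k + 1))) * (1 - ξ ^ (k + 1)) := by
    intro k hk
    have hk' := Finset.mem_range.mp hk
    have hkey : ξ ^ (r - (k + 1)) * ξ ^ (k + 1) = 1 := by
      rw [← pow_add, Nat.sub_add_cancel (by omega), h1]
    linear_combination -hkey
  rw [step1, Finset.prod_congr rfl step2, Finset.prod_mul_distrib]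
  congr 1
  rw [Finset.prod_mul_distrib, Finset.prod_const, Finset.card_range,
    Finset.prod_pow_eq_pow_sum]

lemma OXi_eq (ξ : ℂ) (r : ℕ) :
    OXi ξ r = ∏ k ∈ Finset.range ((r - 1) / 2), (1 - ξ ^ (k + 1)) := by
  rw [OXi, ← Finset.Ico_add_one_right_eq_Icc, Finset.prod_Ico_eq_prod_range]
  simp [add_comm]

/-- For `ξ` a primitive `r`-th root of unity, `O_ξ²` is associated in `ℤ[ξ]` to `r` if `r`
is odd, and to `r/2` if `r` is even. -/
theorem stmt_11 (r : ℕ) (hr : 2 ≤ r) (ξ : ℂ) (hξ : IsPrimitiveRoot ξ r) :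
    (Odd r → AssociatedIn (Subring.closure {ξ}) (OXi ξ r ^ 2) (r : ℂ)) ∧
    (Even r → AssociatedIn (Subring.closure {ξ}) (OXi ξ r ^ 2) ((r / 2 : ℕ) : ℂ)) := by
  have h1 : ξ ^ r = 1 := hξ.pow_eq_one
  have hr1 : 1 ≤ r := by omega
  have hξ' : IsPrimitiveRoot ξ ((r - 1) + 1) := by rwa [Nat.sub_add_cancel hr1]
  have full : ∏ k ∈ Finset.range (r - 1), (1 - ξ ^ (k + 1)) = (r : ℂ) := by
    rw [hξ'.prod_one_sub_pow_eq_order]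
    push_cast [Nat.cast_sub hr1]
    ring
  constructor
  · rintro ⟨t, ht⟩
    have hm : (r - 1) / 2 = t := by omega
    have hsplit : r - 1 = t + t := by omega
    rw [hsplit, Finset.prod_range_add] at full
    have hsh : ∀ k ∈ Finset.range t, (1 - ξ ^ (t + k + 1)) = (1 - ξ ^ (r - t + k)) := by
      intro k hk
      congr 2
      omega
    rw [Finset.prod_congr rfl hsh, aux_reflect r t ξ h1 (by omega)] at full
    refine aux_assoc r hr1 ξ h1 t (∑ k ∈ Finset.range t, (r - (k + 1)))
      (OXi ξ r ^ 2) (r : ℂ) ?_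
    rw [← full, OXi_eq, hm]
    ring
  · rintro ⟨t, ht⟩
    have ht1 : 1 ≤ t := by omega
    have hm : (r - 1) / 2 = t - 1 := by omega
    set m := t - 1 with hmdef
    have hsplit : r - 1 = (m + 1) + m := by omega
    rw [hsplit, Finset.prod_range_add, Finset.prod_range_succ] at full
    have hneg : ξ ^ (m + 1) = -1 := by
      have hsq : ξ ^ (m + 1) * ξ ^ (m + 1) = 1 := by
        rw [← pow_add]
        have : (m + 1) + (m + 1) = r := by omega
        rw [this, h1]
      rcases mul_self_eq_one_iff.mp hsq with h | h
      · exact absurd h (hξ.pow_ne_one_of_pos_of_lt (by omega) (by omega))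
      · exact h
    have hsh : ∀ k ∈ Finset.range m, (1 - ξ ^ (m + 1 + k + 1)) = (1 - ξ ^ (r - m + k)) := by
      intro k hk
      congr 2
      omega
    rw [Finset.prod_congr rfl hsh, aux_reflect r m ξ h1 (by omega), hneg] at full
    have hhalf : ((r / 2 : ℕ) : ℂ) = (t : ℂ) := by congr 1; omega
    refine aux_assoc r hr1 ξ h1 m (∑ k ∈ Finset.range m, (r - (k + 1)))
      (OXi ξ r ^ 2) _ ?_
    rw [hhalf]
    have hrt : (r : ℂ) = 2 * t := by rw [ht]; push_cast; ring
    have h2 : (2 : ℂ) * (t : ℂ) =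
        2 * (((-1) ^ m * ξ ^ (∑ k ∈ Finset.range m, (r - (k + 1)))) * OXi ξ r ^ 2) := by
      rw [← hrt, ← full, OXi_eq, hm]
      ring
    exact mul_left_cancel₀ (two_ne_zero (α := ℂ)) h2
end
end

section
/- Let r ≥ 2 and let ξ ∈ ℂ be a primitive r-th root of unity. For every integer k with 0 ≤ k < r, the element O_ξ divides (ξ;ξ)_{⌊k/2⌋}·x_{r-1-k} in ℤ[ξ]. -/
noncomputable section

/-- `x_k = ∏_{j=⌊k/2⌋+1}^{k} (1 - ξ^j)`. -/
def xXi (ξ : ℂ) (k : ℕ) : ℂ := ∏ j ∈ Finset.Icc (k / 2 + 1) k, (1 - ξ ^ j)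

lemma stmt_12_aux (r : ℕ) (hr : 2 ≤ r) (ξ : ℂ) (hξ : IsPrimitiveRoot ξ r) :
    ∀ m, m ≤ r - 1 → ∃ c ∈ Subring.closure ({ξ} : Set ℂ),
      (∏ j ∈ Finset.Icc 1 ((r - 1 - m) / 2), (1 - ξ ^ j)) * xXi ξ m = OXi ξ r * c := by
  have hone : ξ ^ r = 1 := hξ.pow_eq_one
  have hne : ∀ j, 1 ≤ j → j < r → (1 : ℂ) - ξ ^ j ≠ 0 := by
    intro j h1 h2
    exact sub_ne_zero.mpr (Ne.symm (hξ.pow_ne_one_of_pos_of_lt (by omega) h2))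
  have hξR : ξ ∈ Subring.closure ({ξ} : Set ℂ) := Subring.subset_closure rfl
  have hpow : ∀ t : ℕ, ξ ^ t ∈ Subring.closure ({ξ} : Set ℂ) :=
    fun t => Subring.pow_mem _ hξR t
  have hsplit_bot : ∀ a b : ℕ, a ≤ b →
      (∏ j ∈ Finset.Icc a b, (1 - ξ ^ j))
        = (1 - ξ ^ a) * ∏ j ∈ Finset.Icc (a + 1) b, (1 - ξ ^ j) := by
    intro a b hab
    have hins : Finset.Icc a b = insert a (Finset.Icc (a + 1) b) := by
      ext x; simp only [Finset.mem_Icc, Finset.mem_insert]; omega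
    rw [hins, Finset.prod_insert (by simp only [Finset.mem_Icc]; omega)]
  intro m
  induction m with
  | zero =>
    intro _
    refine ⟨1, Subring.one_mem _, ?_⟩
    simp [xXi, OXi]
  | succ m ih =>
    intro hm1
    obtain ⟨c, hcR, hc⟩ := ih (by omega)
    set K := r - 1 - m with hK
    have hK1 : 1 ≤ K := by omega
    have hKr : K < r := by omega
    have hxeven : m % 2 = 0 → xXi ξ (m + 1) = xXi ξ m * (1 - ξ ^ (m + 1)) := by
      intro h
      simp only [xXi]
      rw [show (m + 1) / 2 = m / 2 from by omega]
      exact Finset.prod_Icc_succ_top (by omega) _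
    have hxodd : m % 2 = 1 →
        (1 - ξ ^ (m / 2 + 1)) * xXi ξ (m + 1) = xXi ξ m * (1 - ξ ^ (m + 1)) := by
      intro h
      simp only [xXi]
      rw [show (m + 1) / 2 = m / 2 + 1 from by omega]
      rw [Finset.prod_Icc_succ_top (show m / 2 + 1 + 1 ≤ m + 1 from by omega)]
      rw [hsplit_bot (m / 2 + 1) m (by omega)]
      ring
    rcases Nat.even_or_odd m with hme | hmo
    · have hm2 : m % 2 = 0 := Nat.even_iff.mp hme
      rcases Nat.even_or_odd K with hKe | hKo
      · -- m even, K even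
        have hK2 : K % 2 = 0 := Nat.even_iff.mp hKe
        have hidx : (r - 1 - (m + 1)) / 2 = K / 2 - 1 := by omega
        rw [hidx]
        have hP : (∏ j ∈ Finset.Icc 1 (K / 2), (1 - ξ ^ j))
            = (∏ j ∈ Finset.Icc 1 (K / 2 - 1), (1 - ξ ^ j)) * (1 - ξ ^ (K / 2)) := by
          have h := Finset.prod_Icc_succ_top
            (show 1 ≤ K / 2 - 1 + 1 from by omega) (fun j => 1 - ξ ^ j)
          rw [show K / 2 - 1 + 1 = K / 2 from by omega] at h
          exact h
        have e1 : ξ ^ (K / 2) * ξ ^ (K / 2) = ξ ^ K := by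
          rw [← pow_add]; congr 1; omega
        have e2 : ξ ^ (r - K) * ξ ^ K = 1 := by
          rw [← pow_add, show r - K + K = r from by omega, hone]
        have hf : (1 : ℂ) - ξ ^ (m + 1)
            = (1 - ξ ^ (K / 2)) * (-ξ ^ (r - K) * (1 + ξ ^ (K / 2))) := by
          rw [show m + 1 = r - K from by omega]
          linear_combination (-(ξ ^ (r - K))) * e1 - e2
        refine ⟨c * (-ξ ^ (r - K) * (1 + ξ ^ (K / 2))), ?_, ?_⟩
        · exact Subring.mul_mem _ hcR (Subring.mul_mem _
            (Subring.neg_mem _ (hpow _))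
            (Subring.add_mem _ (Subring.one_mem _) (hpow _)))
        · rw [hxeven hm2, hf]
          linear_combination
            (-(xXi ξ m * (-ξ ^ (r - K) * (1 + ξ ^ (K / 2))))) * hP
              + (-ξ ^ (r - K) * (1 + ξ ^ (K / 2))) * hc
      · -- m even, K odd
        have hK2 : K % 2 = 1 := Nat.odd_iff.mp hKo
        have hidx : (r - 1 - (m + 1)) / 2 = K / 2 := by omega
        rw [hidx]
        refine ⟨c * (1 - ξ ^ (m + 1)), Subring.mul_mem _ hcR
          (Subring.sub_mem _ (Subring.one_mem _) (hpow _)), ?_⟩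
        rw [hxeven hm2]
        linear_combination (1 - ξ ^ (m + 1)) * hc
    · have hm2 : m % 2 = 1 := Nat.odd_iff.mp hmo
      have hDu : (1 : ℂ) - ξ ^ (m / 2 + 1) ≠ 0 := hne _ (by omega) (by omega)
      have e1 : ξ ^ (m / 2 + 1) * ξ ^ (m / 2 + 1) = ξ ^ (m + 1) := by
        rw [← pow_add]; congr 1; omega
      rcases Nat.even_or_odd K with hKe | hKo
      · -- m odd, K even (so r even)
        have hK2 : K % 2 = 0 := Nat.even_iff.mp hKe
        have hidx : (r - 1 - (m + 1)) / 2 = K / 2 - 1 := by omega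
        rw [hidx]
        have hD : (1 : ℂ) - ξ ^ (K / 2) ≠ 0 := hne _ (by omega) (by omega)
        have hhalf : ξ ^ (r / 2) = -1 := by
          have h2 : ξ ^ (r / 2) * ξ ^ (r / 2) = 1 := by
            rw [← pow_add, show r / 2 + r / 2 = r from by omega, hone]
          rcases mul_self_eq_one_iff.mp h2 with h | h
          · exact absurd h (hξ.pow_ne_one_of_pos_of_lt (by omega) (by omega))
          · exact h
        have e2 : ξ ^ (m / 2 + 1) * ξ ^ (K / 2) = -1 := by
          rw [← pow_add, show m / 2 + 1 + K / 2 = r / 2 from by omega, hhalf]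
        have hf : (1 : ℂ) - ξ ^ (m + 1)
            = ξ ^ (m / 2 + 1) * ((1 - ξ ^ (m / 2 + 1)) * (1 - ξ ^ (K / 2))) := by
          linear_combination e1 + (1 - ξ ^ (m / 2 + 1)) * e2
        have hP : (∏ j ∈ Finset.Icc 1 (K / 2), (1 - ξ ^ j))
            = (∏ j ∈ Finset.Icc 1 (K / 2 - 1), (1 - ξ ^ j)) * (1 - ξ ^ (K / 2)) := by
          have h := Finset.prod_Icc_succ_top
            (show 1 ≤ K / 2 - 1 + 1 from by omega) (fun j => 1 - ξ ^ j)
          rw [show K / 2 - 1 + 1 = K / 2 from by omega] at h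
          exact h
        refine ⟨c * ξ ^ (m / 2 + 1), Subring.mul_mem _ hcR (hpow _), ?_⟩
        have main :
            ((∏ j ∈ Finset.Icc 1 (K / 2 - 1), (1 - ξ ^ j)) * xXi ξ (m + 1))
              * ((1 - ξ ^ (m / 2 + 1)) * (1 - ξ ^ (K / 2)))
            = (OXi ξ r * (c * ξ ^ (m / 2 + 1)))
              * ((1 - ξ ^ (m / 2 + 1)) * (1 - ξ ^ (K / 2))) := by
          linear_combination
            ((∏ j ∈ Finset.Icc 1 (K / 2 - 1), (1 - ξ ^ j)) * (1 - ξ ^ (K / 2)))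
                * hxodd hm2
              - (xXi ξ m * (1 - ξ ^ (m + 1))) * hP
              + (1 - ξ ^ (m + 1)) * hc
              + (OXi ξ r * c) * hf
        exact mul_right_cancel₀ (mul_ne_zero hDu hD) main
      · -- m odd, K odd
        have hK2 : K % 2 = 1 := Nat.odd_iff.mp hKo
        have hidx : (r - 1 - (m + 1)) / 2 = K / 2 := by omega
        rw [hidx]
        have hf : (1 : ℂ) - ξ ^ (m + 1)
            = (1 - ξ ^ (m / 2 + 1)) * (1 + ξ ^ (m / 2 + 1)) := by
          linear_combination e1
        refine ⟨c * (1 + ξ ^ (m / 2 + 1)), Subring.mul_mem _ hcR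
          (Subring.add_mem _ (Subring.one_mem _) (hpow _)), ?_⟩
        have main :
            ((∏ j ∈ Finset.Icc 1 (K / 2), (1 - ξ ^ j)) * xXi ξ (m + 1))
              * (1 - ξ ^ (m / 2 + 1))
            = (OXi ξ r * (c * (1 + ξ ^ (m / 2 + 1)))) * (1 - ξ ^ (m / 2 + 1)) := by
          linear_combination
            (∏ j ∈ Finset.Icc 1 (K / 2), (1 - ξ ^ j)) * hxodd hm2
              + (1 - ξ ^ (m + 1)) * hc
              + (OXi ξ r * c) * hf
        exact mul_right_cancel₀ hDu main

/-- For `ξ` a primitive `r`-th root of unity and `0 ≤ k < r`, `O_ξ` divides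
`(ξ;ξ)_{⌊k/2⌋} · x_{r-1-k}` in `ℤ[ξ]`. -/
theorem stmt_12 (r : ℕ) (hr : 2 ≤ r) (ξ : ℂ) (hξ : IsPrimitiveRoot ξ r)
    (k : ℕ) (hk : k < r) :
    ∃ c ∈ Subring.closure ({ξ} : Set ℂ),
      (∏ j ∈ Finset.Icc 1 (k / 2), (1 - ξ ^ j)) * xXi ξ (r - 1 - k) = OXi ξ r * c := by
  obtain ⟨c, hcR, hc⟩ := stmt_12_aux r hr ξ hξ (r - 1 - k) (by omega)
  rw [show r - 1 - (r - 1 - k) = k from by omega] at hc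
  exact ⟨c, hcR, hc⟩
end
end

section
/- Let r ≥ 2 with r ≡ 0 (mod 4), let ξ ∈ ℂ be a primitive r-th root of unity, and let b, d be integers with d odd. Then G(b,d,ξ) = 0. -/
noncomputable section

/-- The quadratic Gauss sum `G(b,d,η) = Σ_{n=0}^{s-1} η^{bn²+dn}` for a root of unity `η`
of order `s`. -/
def GaussSum (s : ℕ) (b d : ℤ) (η : ℂ) : ℂ :=
  ∑ n ∈ Finset.range s, η ^ (b * (n : ℤ) ^ 2 + d * (n : ℤ))

/-- If `r ≡ 0 (mod 4)`, `ξ` is a primitive `r`-th root of unity, and `d` is odd, then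
`G(b,d,ξ) = 0`. -/
theorem stmt_14 (r : ℕ) (hr : 2 ≤ r) (h4 : r % 4 = 0) (ξ : ℂ) (hξ : IsPrimitiveRoot ξ r)
    (b d : ℤ) (hd : Odd d) : GaussSum r b d ξ = 0 := by
  obtain ⟨m, hm⟩ : 4 ∣ r := Nat.dvd_of_mod_eq_zero h4
  have hm0 : 0 < m := by omega
  have hξ0 : ξ ≠ 0 := hξ.ne_zero (by omega)
  have hr1 : ξ ^ (r : ℤ) = 1 := by
    rw [zpow_natCast]; exact hξ.pow_eq_one
  have hhalf : ξ ^ (2 * m : ℕ) = -1 := by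
    have : IsPrimitiveRoot (ξ ^ (2 * m)) 2 :=
      hξ.pow (by omega) (by omega)
    exact this.eq_neg_one_of_two_right
  have key : ∀ n : ℕ, ξ ^ (b * ((n + 2 * m : ℕ) : ℤ) ^ 2 + d * ((n + 2 * m : ℕ) : ℤ))
      = - ξ ^ (b * (n : ℤ) ^ 2 + d * (n : ℤ)) := by
    intro n
    push_cast
    have hexp : b * ((n : ℤ) + 2 * m) ^ 2 + d * ((n : ℤ) + 2 * m)
        = (b * (n : ℤ) ^ 2 + d * n) + (r : ℤ) * (b * n + b * m) + d * (2 * m) := by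
      have : (r : ℤ) = 4 * m := by exact_mod_cast hm
      rw [this]; ring
    rw [hexp, zpow_add₀ hξ0, zpow_add₀ hξ0, zpow_mul, hr1, one_zpow, mul_one]
    have : ξ ^ ((2 : ℤ) * m) = -1 := by
      rw [show ((2 : ℤ) * m) = ((2 * m : ℕ) : ℤ) by push_cast; ring, zpow_natCast, hhalf]
    rw [mul_comm d ((2:ℤ)*m), zpow_mul, this, hd.neg_one_zpow, mul_neg_one]
  have hr2 : r = 2 * m + 2 * m := by omega
  rw [GaussSum, hr2, Finset.sum_range_add]
  have : ∑ x ∈ Finset.range (2 * m), ξ ^ (b * ((2 * m + x : ℕ) : ℤ) ^ 2 + d * ((2 * m + x : ℕ) : ℤ))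
      = ∑ x ∈ Finset.range (2 * m), -ξ ^ (b * (x : ℤ) ^ 2 + d * (x : ℤ)) :=
    Finset.sum_congr rfl fun i _ => by rw [Nat.add_comm]; exact key i
  rw [this, Finset.sum_neg_distrib]
  ring
end
end

section
/- Let r = r₁·r₂ with r₁ and r₂ coprime positive integers, and let ξ ∈ ℂ be a primitive r-th root of unity. Then for all integers b and d, G(b,d,ξ) = G(b·r₁, d, ξ^{r₁})·G(b·r₂, d, ξ^{r₂}), where ξ^{r₁} is a root of unity of order r₂ and ξ^{r₂} is a root of unity of order r₁. -/
noncomputable section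

/-- If `r = r₁ r₂` with `r₁, r₂` coprime and `ξ` is a primitive `r`-th root of unity, then
`G(b,d,ξ) = G(b r₁, d, ξ^{r₁}) · G(b r₂, d, ξ^{r₂})`, where `ξ^{r₁}` has order `r₂` and
`ξ^{r₂}` has order `r₁`. -/
theorem stmt_15 (r₁ r₂ : ℕ) (h₁ : 0 < r₁) (h₂ : 0 < r₂) (hco : Nat.Coprime r₁ r₂)
    (ξ : ℂ) (hξ : IsPrimitiveRoot ξ (r₁ * r₂)) (b d : ℤ) :
    GaussSum (r₁ * r₂) b d ξ =
      GaussSum r₂ (b * r₁) d (ξ ^ r₁) * GaussSum r₁ (b * r₂) d (ξ ^ r₂) := by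
  haveI : NeZero r₁ := ⟨h₁.ne'⟩
  haveI : NeZero r₂ := ⟨h₂.ne'⟩
  set r : ℕ := r₁ * r₂ with hr
  have hrpos : 0 < r := Nat.mul_pos h₁ h₂
  have hξ0 : ξ ≠ 0 := hξ.ne_zero hrpos.ne'
  have hξ1 : ξ ^ r = 1 := hξ.pow_eq_one
  -- periodicity of zpow
  have per : ∀ a c : ℤ, (r : ℤ) ∣ a - c → ξ ^ a = ξ ^ c := by
    intro a c ⟨k, hk⟩
    have ha : a = c + (r : ℤ) * k := by linarith
    rw [ha, zpow_add₀ hξ0, zpow_mul, zpow_natCast, hξ1, one_zpow, mul_one]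
  -- congruence of the quadratic exponent
  have quadcong : ∀ m n : ℤ, (r : ℤ) ∣ m - n →
      (r : ℤ) ∣ (b * m ^ 2 + d * m) - (b * n ^ 2 + d * n) := by
    intro m n ⟨k, hk⟩
    exact ⟨k * (b * (m + n) + d), by linear_combination (b * (m + n) + d) * hk⟩
  -- injectivity of the reindexing map
  have inj : ∀ p ∈ Finset.range r₂ ×ˢ Finset.range r₁,
      ∀ q ∈ Finset.range r₂ ×ˢ Finset.range r₁,
      (r₁ * p.1 + r₂ * p.2) % r = (r₁ * q.1 + r₂ * q.2) % r → p = q := by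
    intro p hp q hq hpq
    simp only [Finset.mem_product, Finset.mem_range] at hp hq
    have h : (r₁ * p.1 + r₂ * p.2) ≡ (r₁ * q.1 + r₂ * q.2) [MOD r] := hpq
    have hu₂ : IsUnit (r₁ : ZMod r₂) := (ZMod.isUnit_iff_coprime r₁ r₂).mpr hco
    have hu₁ : IsUnit (r₂ : ZMod r₁) := (ZMod.isUnit_iff_coprime r₂ r₁).mpr hco.symm
    have hx : ((p.1 : ZMod r₂)) = (q.1 : ZMod r₂) := by
      have h2 : ((r₁ * p.1 + r₂ * p.2 : ℕ) : ZMod r₂) = ((r₁ * q.1 + r₂ * q.2 : ℕ) : ZMod r₂) :=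
        (ZMod.natCast_eq_natCast_iff _ _ _).mpr (h.of_dvd (dvd_mul_left r₂ r₁))
      push_cast [ZMod.natCast_self] at h2
      simp only [zero_mul, add_zero] at h2
      exact hu₂.mul_right_inj.mp h2
    have hy : ((p.2 : ZMod r₁)) = (q.2 : ZMod r₁) := by
      have h2 : ((r₁ * p.1 + r₂ * p.2 : ℕ) : ZMod r₁) = ((r₁ * q.1 + r₂ * q.2 : ℕ) : ZMod r₁) :=
        (ZMod.natCast_eq_natCast_iff _ _ _).mpr (h.of_dvd (dvd_mul_right r₁ r₂))
      push_cast [ZMod.natCast_self] at h2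
      simp only [zero_mul, zero_add] at h2
      exact hu₁.mul_right_inj.mp h2
    have e1 : p.1 = q.1 := by
      have := congrArg ZMod.val hx
      rwa [ZMod.val_cast_of_lt hp.1, ZMod.val_cast_of_lt hq.1] at this
    have e2 : p.2 = q.2 := by
      have := congrArg ZMod.val hy
      rwa [ZMod.val_cast_of_lt hp.2, ZMod.val_cast_of_lt hq.2] at this
    exact Prod.ext e1 e2
  have key : GaussSum r b d ξ =
      ∑ p ∈ Finset.range r₂ ×ˢ Finset.range r₁,
        (ξ ^ r₁) ^ (b * r₁ * (p.1 : ℤ) ^ 2 + d * (p.1 : ℤ)) *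
        (ξ ^ r₂) ^ (b * r₂ * (p.2 : ℤ) ^ 2 + d * (p.2 : ℤ)) := by
    unfold GaussSum
    refine (Finset.sum_bij (fun p _ => (r₁ * p.1 + r₂ * p.2) % r) ?_ inj ?_ ?_).symm
    · intro p hp
      exact Finset.mem_range.mpr (Nat.mod_lt _ hrpos)
    · -- surjectivity via cardinality
      intro n hn
      have hcard : (Finset.range r).card ≤ ((Finset.range r₂) ×ˢ (Finset.range r₁)).card := by
        simp [hr, Nat.mul_comm]
      obtain ⟨p, hp, hpn⟩ := Finset.surj_on_of_inj_on_of_card_le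
        (fun p (_ : p ∈ Finset.range r₂ ×ˢ Finset.range r₁) => (r₁ * p.1 + r₂ * p.2) % r)
        (fun p hp => Finset.mem_range.mpr (Nat.mod_lt _ hrpos))
        (fun p q hp hq => inj p hp q hq) hcard n hn
      exact ⟨p, hp, hpn.symm⟩
    · -- values agree
      intro p hp
      set x : ℤ := (p.1 : ℤ)
      set y : ℤ := (p.2 : ℤ)
      set m : ℕ := r₁ * p.1 + r₂ * p.2 with hm
      have hdvd : (r : ℤ) ∣ ((m % r : ℕ) : ℤ) - (m : ℤ) := by
        have : ((m % r : ℕ) : ℤ) = (m : ℤ) % (r : ℤ) := by push_cast; rfl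
        rw [this]
        exact dvd_sub_comm.mp (Int.dvd_self_sub_of_emod_eq rfl)
      have step1 : ξ ^ (b * ((m % r : ℕ) : ℤ) ^ 2 + d * ((m % r : ℕ) : ℤ)) =
          ξ ^ (b * (m : ℤ) ^ 2 + d * (m : ℤ)) :=
        per _ _ (quadcong _ _ hdvd)
      have hmval : (m : ℤ) = r₁ * x + r₂ * y := by push_cast [hm]; ring
      have step2 : ξ ^ (b * (m : ℤ) ^ 2 + d * (m : ℤ)) =
          ξ ^ ((r₁ : ℤ) * (b * r₁ * x ^ 2 + d * x) + (r₂ : ℤ) * (b * r₂ * y ^ 2 + d * y)) := by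
        apply per
        refine ⟨2 * b * x * y, ?_⟩
        rw [hmval]; push_cast [hr]; ring
      have step3 : ξ ^ ((r₁ : ℤ) * (b * r₁ * x ^ 2 + d * x) + (r₂ : ℤ) * (b * r₂ * y ^ 2 + d * y))
          = (ξ ^ r₁) ^ (b * r₁ * x ^ 2 + d * x) * (ξ ^ r₂) ^ (b * r₂ * y ^ 2 + d * y) := by
        rw [zpow_add₀ hξ0, zpow_mul, zpow_mul, zpow_natCast, zpow_natCast]
      rw [step1, step2, step3]
  rw [key]
  unfold GaussSum
  rw [Finset.sum_mul_sum, Finset.sum_product]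
end
end

section
/- Let r ≥ 2, let ξ ∈ ℂ be a primitive r-th root of unity, and let ζ ∈ ℂ satisfy ζ⁴ = ξ. For each sign ± define F^{SU(2)}_{U^±} := (1/4)·Σ_{n=0}^{4r-1} ζ^{±(n²-1)}·[n]_ζ², and, when r is odd, F^{SO(3)}_{U^±} := (1/4)·Σ_{n=0, n odd}^{4r-1} ξ^{±(n²-1)/4}·[n]_ζ². Then F^{SU(2)}_{U^±} = 0 if and only if ζ has multiplicative order 2r; and when r is odd, F^{SO(3)}_{U^±} ≠ 0 for every choice of ζ. -/
noncomputable section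

/-- The quantum integer `[n]_ζ = (ζ^{2n} - ζ^{-2n})/(ζ² - ζ^{-2})`. -/
def qInt (ζ : ℂ) (n : ℤ) : ℂ := (ζ ^ (2 * n) - ζ ^ (-(2 * n))) / (ζ ^ (2 : ℤ) - ζ ^ (-2 : ℤ))

/-- `F^{SU(2)}_{U^±} = (1/4) Σ_{n=0}^{4r-1} ζ^{±(n²-1)} [n]_ζ²` (the sign is `ε = ±1`). -/
def FSU2 (r : ℕ) (ζ : ℂ) (ε : ℤ) : ℂ :=
  (1 / 4 : ℂ) * ∑ n ∈ Finset.range (4 * r), ζ ^ (ε * ((n : ℤ) ^ 2 - 1)) * qInt ζ n ^ 2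

/-- `F^{SO(3)}_{U^±} = (1/4) Σ_{n odd, 0 ≤ n < 4r} ξ^{±(n²-1)/4} [n]_ζ²` (for `r` odd, where
`(n²-1)/4 ∈ ℤ` for odd `n`). -/
def FSO3 (r : ℕ) (ξ ζ : ℂ) (ε : ℤ) : ℂ :=
  (1 / 4 : ℂ) * ∑ n ∈ (Finset.range (4 * r)).filter (fun n => Odd n),
    ξ ^ (ε * (((n : ℤ) ^ 2 - 1) / 4)) * qInt ζ n ^ 2

/-!
Expanding `[n]_ζ²` and shifting the summation index by `±2` turns `4 (ζ² - ζ⁻²)² F` into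
`2 ζ⁻¹ (ζ⁻⁴ - 1)` times a quadratic Gauss sum `Σ ζ^{n²}` (over odd `n` for `SO(3)`); the factor is
nonzero because `ζ⁴ = ξ ≠ 1`. If `ζ` has order `d`, the Gauss sum `G = Σ_{n<N} ζ^{n²}` vanishes
exactly when `d ≡ 2 (mod 4)`: then `ζ^{d/2} = -1`, and shifting `n` by the odd number `d/2` gives
`G = -G`; otherwise `G · G(ζ⁻¹) = N · #{h < N : ζ^{2h} = 1}`, since every `ζ^{h²}` occurring there
is `1`. As `ζ⁴` has order `r`, `d ≡ 2 (mod 4)` means `d = 2r`. The sign `-` reduces to `+` by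
passing to `(ξ⁻¹, ζ⁻¹)`.
-/

open Finset Function

theorem Function.Periodic.sum_range_add_one {M : Type*} [AddCommGroup M] {f : ℤ → M} {N : ℕ}
    (hf : Periodic f N) : ∑ n ∈ range N, f (n + 1) = ∑ n ∈ range N, f n := by
  have h := (sum_range_succ' (fun n : ℕ => f n) N).symm.trans (sum_range_succ _ N)
  rw [show f (N : ℤ) = f 0 by simpa using hf 0] at h
  push_cast at h
  exact add_right_cancel h

theorem Function.Periodic.sum_range_add {M : Type*} [AddCommGroup M] {f : ℤ → M} {N : ℕ}
    (hf : Periodic f N) (k : ℤ) : ∑ n ∈ range N, f (n + k) = ∑ n ∈ range N, f n := by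
  induction k using Int.induction_on with
  | zero => simp
  | succ k ih =>
    simpa only [add_assoc, add_comm (1 : ℤ)] using ((hf.add_const k).sum_range_add_one).trans ih
  | pred k ih =>
    rw [← ih, ← (hf.add_const (-(k : ℤ) - 1)).sum_range_add_one]
    simp only [add_assoc, add_sub_cancel]

theorem Int.dvd_sq_of_dvd_two_mul {d : ℕ} {h : ℤ} (hd : d % 4 ≠ 2) (h2 : (d : ℤ) ∣ 2 * h) :
    (d : ℤ) ∣ h ^ 2 := by
  rcases Nat.even_or_odd d with heven | hodd
  · obtain ⟨e, rfl⟩ : 4 ∣ d := by rcases heven with ⟨k, rfl⟩; omega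
    obtain ⟨k, hk⟩ : 2 * (e : ℤ) ∣ h := by
      push_cast at h2
      exact (mul_dvd_mul_iff_left two_ne_zero).mp (by rw [← mul_assoc]; simpa using h2)
    exact ⟨e * k ^ 2, by push_cast; rw [hk]; ring⟩
  · have hcop : IsCoprime (d : ℤ) 2 := Nat.isCoprime_iff_coprime.mpr hodd.coprime_two_right
    exact dvd_pow (hcop.dvd_of_dvd_mul_left h2) two_ne_zero

theorem geom_sum_eq_ite_of_pow_eq_one {K : Type*} [Field K] [DecidableEq K] {w : K} {N : ℕ}
    (hw : w ^ N = 1) : ∑ k ∈ range N, w ^ k = if w = 1 then (N : K) else 0 := by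
  split_ifs with h
  · simp [h]
  · rw [geom_sum_eq h, hw, sub_self, zero_div]

section QuadGaussSum

variable {K : Type*} [Field K] {ζ : K} {N : ℕ} {a b : ℤ}

def quadGaussSum (ζ : K) (N : ℕ) (a b : ℤ) : K := ∑ j ∈ range N, ζ ^ ((a * j + b) ^ 2)

theorem periodic_zpow_sq (hζ : ζ ≠ 0) (hper : ζ ^ (a * N) = 1) (b : ℤ) :
    Periodic (fun j : ℤ => ζ ^ ((a * j + b) ^ 2)) N := fun j => by
  dsimp only
  rw [show (a * (j + N) + b) ^ 2 = (a * j + b) ^ 2 + a * N * (2 * (a * j + b) + a * N) by ring,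
    zpow_add₀ hζ, zpow_mul, hper, one_zpow, mul_one]

theorem zpow_sq_sub_one_mul_sub_sq (hζ : ζ ≠ 0) (m : ℤ) :
    ζ ^ (m ^ 2 - 1) * (ζ ^ (2 * m) - ζ ^ (-(2 * m))) ^ 2 =
      ζ⁻¹ ^ 5 * (ζ ^ ((m + 2) ^ 2) + ζ ^ ((m - 2) ^ 2)) - 2 * ζ⁻¹ * ζ ^ (m ^ 2) := by
  rw [show (m + 2) ^ 2 = m ^ 2 + m * 4 + 4 by ring, show (m - 2) ^ 2 = m ^ 2 + -(m * 4) + 4 by ring,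
    mul_comm 2 m]
  simp only [zpow_sub₀ hζ, zpow_add₀ hζ, zpow_neg, zpow_mul, zpow_ofNat]
  field_simp
  ring

theorem sum_zpow_sq_sub_one_mul_sub_sq (hζ : ζ ≠ 0) (hper : ζ ^ (a * N) = 1) {s : ℤ}
    (has : a * s = 2) :
    ∑ j ∈ range N,
        ζ ^ ((a * j + b) ^ 2 - 1) * (ζ ^ (2 * (a * j + b)) - ζ ^ (-(2 * (a * j + b)))) ^ 2 =
      2 * ζ⁻¹ * (ζ⁻¹ ^ 4 - 1) * quadGaussSum ζ N a b := by
  have hf := periodic_zpow_sq hζ hper b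
  have hup (j : ℤ) : a * j + b + 2 = a * (j + s) + b := by linear_combination -has
  have hdown (j : ℤ) : a * j + b - 2 = a * (j + -s) + b := by linear_combination has
  simp only [zpow_sq_sub_one_mul_sub_sq hζ, hup, hdown, sum_sub_distrib, ← mul_sum, sum_add_distrib]
  rw [hf.sum_range_add, hf.sum_range_add, quadGaussSum]
  ring

theorem quadGaussSum_mul_inv [DecidableEq K] (hζ : ζ ≠ 0) (hper : ζ ^ (a * N) = 1) :
    quadGaussSum ζ N a b * quadGaussSum ζ⁻¹ N a b =
      N * ∑ h ∈ range N, if ζ ^ (2 * a ^ 2 * h) = 1 then ζ ^ (a * h * (a * h + 2 * b)) else 0 := by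
  have hdiff (h k : ℕ) : ζ ^ ((a * (h + k) + b) ^ 2) * ζ⁻¹ ^ ((a * k + b) ^ 2) =
      ζ ^ (a * h * (a * h + 2 * b)) * (ζ ^ (2 * a ^ 2 * h)) ^ k := by
    rw [inv_zpow', ← zpow_add₀ hζ, ← zpow_natCast, ← zpow_mul, ← zpow_add₀ hζ]
    ring_nf
  calc quadGaussSum ζ N a b * quadGaussSum ζ⁻¹ N a b
      = ∑ k ∈ range N, ∑ h ∈ range N, ζ ^ ((a * (h + k) + b) ^ 2) * ζ⁻¹ ^ ((a * k + b) ^ 2) := by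
        rw [quadGaussSum, quadGaussSum, mul_sum]
        refine sum_congr rfl fun k _ => ?_
        rw [← (periodic_zpow_sq hζ hper b).sum_range_add k, sum_mul]
    _ = ∑ h ∈ range N,
          ζ ^ (a * h * (a * h + 2 * b)) * ∑ k ∈ range N, (ζ ^ (2 * a ^ 2 * h)) ^ k := by
        simp only [hdiff, mul_sum]
        exact sum_comm
    _ = _ := by
        rw [mul_sum]
        refine sum_congr rfl fun h _ => ?_
        rw [geom_sum_eq_ite_of_pow_eq_one]
        · split_ifs <;> ring
        · rw [← zpow_natCast, ← zpow_mul, show 2 * a ^ 2 * h * N = a * N * (2 * a * h) by ring,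
            zpow_mul, hper, one_zpow]

theorem quadGaussSum_ne_zero [CharZero K] (hN : 0 < N) (hζ : ζ ≠ 0) (hper : ζ ^ (a * N) = 1)
    (hq : ∀ h : ℤ, ζ ^ (2 * a ^ 2 * h) = 1 → ζ ^ (a * h * (a * h + 2 * b)) = 1) :
    quadGaussSum ζ N a b ≠ 0 := by
  classical
  intro h0
  have hprod := quadGaussSum_mul_inv (b := b) hζ hper
  have hterm : ∀ h ∈ range N, (if ζ ^ (2 * a ^ 2 * h) = 1 then ζ ^ (a * h * (a * h + 2 * b))
      else 0) = if ζ ^ (2 * a ^ 2 * h) = 1 then 1 else 0 := fun h _ => by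
    split_ifs with hh
    exacts [hq _ hh, rfl]
  rw [h0, zero_mul, sum_congr rfl hterm, sum_boole, eq_comm, mul_eq_zero, Nat.cast_eq_zero,
    Nat.cast_eq_zero, card_eq_zero] at hprod
  refine hprod.elim hN.ne' fun hempty => ?_
  exact (filter_eq_empty_iff.mp hempty) (mem_range.mpr hN) (by simp)

theorem quadGaussSum_eq_zero_of_zpow_sq_eq_neg_one [CharZero K] (hζ : ζ ≠ 0)
    (hper : ζ ^ N = 1) {m : ℤ} (h2m : ζ ^ (2 * m) = 1) (hm : ζ ^ (m ^ 2) = -1) :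
    quadGaussSum ζ N 1 0 = 0 := by
  have hf := periodic_zpow_sq hζ (a := 1) (by rwa [one_mul, zpow_natCast]) 0
  have hneg : quadGaussSum ζ N 1 0 = -quadGaussSum ζ N 1 0 := by
    conv_lhs => rw [quadGaussSum, ← hf.sum_range_add m]
    rw [quadGaussSum, ← sum_neg_distrib]
    refine sum_congr rfl fun n _ => ?_
    rw [show (1 * (n + m) + 0) ^ 2 = (1 * n + 0) ^ 2 + 2 * m * n + m ^ 2 by ring,
      zpow_add₀ hζ, zpow_add₀ hζ, zpow_mul, h2m, one_zpow, hm]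
    ring
  exact self_eq_neg.mp hneg

theorem quadGaussSum_eq_zero_iff [CharZero K] (hN : 0 < N) (hper : ζ ^ N = 1) :
    quadGaussSum ζ N 1 0 = 0 ↔ orderOf ζ % 4 = 2 := by
  have hζ : ζ ≠ 0 := by rintro rfl; simp [hN.ne'] at hper
  have hprim := IsPrimitiveRoot.orderOf ζ
  constructor
  · contrapose
    intro hmod
    refine quadGaussSum_ne_zero hN hζ (by rwa [one_mul, zpow_natCast]) fun h h2 => ?_
    rw [hprim.zpow_eq_one_iff_dvd] at h2 ⊢
    simpa [sq] using Int.dvd_sq_of_dvd_two_mul hmod (by simpa using h2)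
  · intro hmod
    obtain ⟨m, hm⟩ : ∃ m, orderOf ζ = m * 2 := ⟨orderOf ζ / 2, by omega⟩
    have hodd : Odd m := by rw [Nat.odd_iff]; omega
    have hζm : ζ ^ m = -1 := (hprim.pow (by omega) hm).eq_neg_one_of_two_right
    refine quadGaussSum_eq_zero_of_zpow_sq_eq_neg_one hζ hper (m := m) ?_ ?_
    · rw [hprim.zpow_eq_one_iff_dvd, hm]
      exact ⟨1, by push_cast; ring⟩
    · rw [sq, zpow_mul, zpow_natCast, zpow_natCast, hζm, hodd.neg_one_pow]

end QuadGaussSum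

theorem orderOf_eq_two_mul_iff_mod_four {M : Type*} [CommMonoid M] {x : M} {r : ℕ} (hr : 0 < r)
    (hx : IsPrimitiveRoot (x ^ 4) r) : orderOf x = 2 * r ↔ orderOf x % 4 = 2 := by
  have hd : orderOf x = r * Nat.gcd (orderOf x) 4 := by
    rw [hx.eq_orderOf, orderOf_pow' x four_ne_zero, Nat.div_mul_cancel (Nat.gcd_dvd_left _ _)]
  have hg : Nat.gcd (orderOf x) 4 = Nat.gcd (orderOf x % 4) 4 := by
    rw [Nat.gcd_comm, Nat.gcd_rec, Nat.gcd_comm]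
  rw [hg] at hd
  have hlt := Nat.mod_lt (orderOf x) four_pos
  generalize orderOf x % 4 = c at hd hlt ⊢
  rw [hd]
  interval_cases c <;> simp <;> omega

theorem orderOf_inv₀ {G₀ : Type*} [GroupWithZero G₀] (x : G₀) : orderOf x⁻¹ = orderOf x :=
  orderOf_eq_orderOf_iff.mpr fun n => by rw [inv_pow, inv_eq_one]

theorem quadGaussSum_two_one_ne_zero {K : Type*} [Field K] [CharZero K] {r : ℕ} {ξ ζ : K}
    (hr : Odd r) (hξ : IsPrimitiveRoot ξ r) (hζξ : ζ ^ 4 = ξ) : quadGaussSum ζ (2 * r) 2 1 ≠ 0 := by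
  have hζ : ζ ≠ 0 := ne_zero_pow four_ne_zero (hζξ ▸ hξ.ne_zero hr.pos.ne')
  have hpow (k : ℤ) : ζ ^ (4 * k) = ξ ^ k := by rw [zpow_mul, zpow_ofNat, hζξ]
  refine quadGaussSum_ne_zero (by linarith [hr.pos]) hζ ?_ fun h hh => ?_
  · rw [show (2 * ((2 * r : ℕ) : ℤ)) = 4 * r by push_cast; ring, hpow, hξ.zpow_eq_one]
  · rw [show 2 * 2 ^ 2 * h = 4 * (2 * h) by ring, hpow, hξ.zpow_eq_one_iff_dvd] at hh
    rw [show 2 * h * (2 * h + 2 * 1) = 4 * (h * (h + 1)) by ring, hpow, hξ.zpow_eq_one_iff_dvd]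
    have hcop : IsCoprime (r : ℤ) 2 := Nat.isCoprime_iff_coprime.mpr hr.coprime_two_right
    exact dvd_mul_of_dvd_left (hcop.dvd_of_dvd_mul_left hh) _

theorem qInt_inv (ζ : ℂ) (n : ℤ) : qInt ζ⁻¹ n = qInt ζ n := by
  simp only [qInt, inv_zpow', neg_neg]
  rw [← neg_div_neg_eq, neg_sub, neg_sub]

theorem FSU2_neg_one (r : ℕ) (ζ : ℂ) : FSU2 r ζ (-1) = FSU2 r ζ⁻¹ 1 := by
  simp only [FSU2, qInt_inv, inv_zpow', neg_one_mul, one_mul]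

theorem FSO3_neg_one (r : ℕ) (ξ ζ : ℂ) : FSO3 r ξ ζ (-1) = FSO3 r ξ⁻¹ ζ⁻¹ 1 := by
  simp only [FSO3, qInt_inv, inv_zpow', neg_one_mul, one_mul]

theorem sum_zpow_sq_sub_one_mul_qInt_sq_eq_zero_iff {N : ℕ} {a b : ℤ} {ζ : ℂ} (hζ : ζ ≠ 0)
    (hζ4 : ζ ^ 4 ≠ 1) (hper : ζ ^ (a * N) = 1) {s : ℤ} (has : a * s = 2) :
    ∑ j ∈ range N, ζ ^ ((a * j + b) ^ 2 - 1) * qInt ζ (a * j + b) ^ 2 = 0 ↔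
      quadGaussSum ζ N a b = 0 := by
  have hD : ζ ^ (2 : ℤ) - ζ ^ (-2 : ℤ) ≠ 0 := by
    rw [sub_ne_zero, zpow_neg]
    intro h
    rw [zpow_ofNat] at h
    apply hζ4
    rw [show 4 = 2 + 2 by rfl, pow_add]
    nth_rewrite 2 [h]
    exact mul_inv_cancel₀ (pow_ne_zero 2 hζ)
  have hζ4' : (ζ ^ 4)⁻¹ - 1 ≠ 0 := by rwa [sub_ne_zero, Ne, inv_eq_one]
  simp only [qInt, div_pow, ← mul_div_assoc, ← sum_div, div_eq_zero_iff, hD, ne_eq,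
    OfNat.ofNat_ne_zero, not_false_eq_true, pow_eq_zero_iff, or_false]
  rw [sum_zpow_sq_sub_one_mul_sub_sq hζ hper has]
  simp [hζ, hζ4']

theorem FSU2_one_eq_zero_iff {r : ℕ} {ζ : ℂ} (hζ : ζ ≠ 0) (hζ4 : ζ ^ 4 ≠ 1)
    (hper : ζ ^ (4 * r) = 1) : FSU2 r ζ 1 = 0 ↔ quadGaussSum ζ (4 * r) 1 0 = 0 := by
  have h := sum_zpow_sq_sub_one_mul_qInt_sq_eq_zero_iff (a := 1) (b := 0) (N := 4 * r) hζ hζ4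
    (by rw [one_mul, zpow_natCast, hper]) (one_mul 2)
  simp only [one_mul, add_zero] at h
  simp [FSU2, h]

theorem FSO3_one_eq_zero_iff {r : ℕ} {ξ ζ : ℂ} (hζ : ζ ≠ 0) (hζ4 : ζ ^ 4 ≠ 1)
    (hper : ζ ^ (4 * r) = 1) (hζξ : ζ ^ 4 = ξ) :
    FSO3 r ξ ζ 1 = 0 ↔ quadGaussSum ζ (2 * r) 2 1 = 0 := by
  have h := sum_zpow_sq_sub_one_mul_qInt_sq_eq_zero_iff (a := 2) (b := 1) (N := 2 * r) hζ hζ4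
    (by rw [← hper, ← zpow_natCast]; push_cast; ring_nf) (mul_one 2)
  have hodd : (range (4 * r)).filter Odd = (range (2 * r)).image (fun j => 2 * j + 1) := by
    ext n
    simp only [mem_filter, mem_range, mem_image, Nat.odd_iff]
    constructor
    · rintro ⟨hn, hodd⟩
      exact ⟨n / 2, by omega, by omega⟩
    · rintro ⟨j, hj, rfl⟩
      omega
  have hterm (j : ℕ) :
      ξ ^ (1 * ((((2 * j + 1 : ℕ) : ℤ) ^ 2 - 1) / 4)) * qInt ζ (2 * j + 1 : ℕ) ^ 2 =
      ζ ^ ((2 * (j : ℤ) + 1) ^ 2 - 1) * qInt ζ (2 * j + 1) ^ 2 := by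
    push_cast
    rw [show (2 * (j : ℤ) + 1) ^ 2 - 1 = 4 * (j ^ 2 + j) by ring,
      Int.mul_ediv_cancel_left _ four_ne_zero, one_mul, ← hζξ, zpow_mul, zpow_ofNat]
  rw [FSO3, hodd, sum_image (fun i _ j _ hij => by omega)]
  simp only [hterm, mul_eq_zero, one_div, inv_eq_zero, OfNat.ofNat_ne_zero, false_or, h]

theorem FSU2_one_eq_zero_iff_orderOf_eq {r : ℕ} (hr : 2 ≤ r) {ξ ζ : ℂ} (hξ : IsPrimitiveRoot ξ r)
    (hζξ : ζ ^ 4 = ξ) : FSU2 r ζ 1 = 0 ↔ orderOf ζ = 2 * r := by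
  have hζ : ζ ≠ 0 := ne_zero_pow four_ne_zero (hζξ ▸ hξ.ne_zero (by omega))
  have hper : ζ ^ (4 * r) = 1 := by rw [pow_mul, hζξ, hξ.pow_eq_one]
  rw [FSU2_one_eq_zero_iff hζ (hζξ ▸ hξ.ne_one (by omega)) hper,
    quadGaussSum_eq_zero_iff (by omega) hper,
    orderOf_eq_two_mul_iff_mod_four (by omega) (hζξ ▸ hξ)]

theorem FSO3_one_ne_zero {r : ℕ} (hr : 2 ≤ r) (hodd : Odd r) {ξ ζ : ℂ} (hξ : IsPrimitiveRoot ξ r)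
    (hζξ : ζ ^ 4 = ξ) : FSO3 r ξ ζ 1 ≠ 0 := by
  have hζ : ζ ≠ 0 := ne_zero_pow four_ne_zero (hζξ ▸ hξ.ne_zero (by omega))
  have hper : ζ ^ (4 * r) = 1 := by rw [pow_mul, hζξ, hξ.pow_eq_one]
  rw [Ne, FSO3_one_eq_zero_iff hζ (hζξ ▸ hξ.ne_one (by omega)) hper hζξ]
  exact quadGaussSum_two_one_ne_zero hodd hξ hζξ

/-- Let `ξ` be a primitive `r`-th root of unity and `ζ⁴ = ξ`. Then `F^{SU(2)}_{U^±} = 0`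
iff `ζ` has multiplicative order `2r`; and if `r` is odd then `F^{SO(3)}_{U^±} ≠ 0` for
every choice of `ζ`. -/
theorem stmt_16 (r : ℕ) (hr : 2 ≤ r) (ξ ζ : ℂ) (hξ : IsPrimitiveRoot ξ r)
    (hζ : ζ ^ 4 = ξ) (ε : ℤ) (hε : ε = 1 ∨ ε = -1) :
    (FSU2 r ζ ε = 0 ↔ orderOf ζ = 2 * r) ∧
    (Odd r → FSO3 r ξ ζ ε ≠ 0) := by
  rcases hε with rfl | rfl
  · exact ⟨FSU2_one_eq_zero_iff_orderOf_eq hr hξ hζ, fun hodd => FSO3_one_ne_zero hr hodd hξ hζ⟩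
  · have hζ' : ζ⁻¹ ^ 4 = ξ⁻¹ := by rw [inv_pow, hζ]
    rw [FSU2_neg_one, FSO3_neg_one, ← orderOf_inv₀ ζ]
    exact ⟨FSU2_one_eq_zero_iff_orderOf_eq hr hξ.inv hζ',
      fun hodd => FSO3_one_ne_zero hr hodd hξ.inv hζ'⟩
end
end
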